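/- arXiv:1009.5422 — 5 statements merged into one kernel-verified Lean document; each statement's English description precedes it below -/
import Mathlib

section
/- Suppose 0 < |B| < |B|_c and |ξ| ≤ |ξ|_{vc}^B. Then for every λ > 0 there is no nontrivial solution of the vertical problem at frequency ξ; that is, any function ψ satisfying the vertical problem at frequency ξ with growth rate λ > 0 is identically zero on [−1,1]. -/
/-!
Multiplying the equation by `ψ` and integrating by parts on each side of the interface, the jump
conditions turn the boundary terms at `0` into `g[ρ]ξ²ψ(0)²`, which gives the energy identity
`λ²∫ρ(ξ²ψ² + ψ'²) + λ∫μ((ψ'' + ξ²ψ)² + 4ξ²ψ'²) + B²∫(ξ²ψ'² + ψ''²) = g[ρ]ξ²ψ(0)²`.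
If `ψ ≠ 0` the first term is positive, so `B²∫ψ''² < ξ²(g[ρ]ψ(0)² - B²∫ψ'²)`. But
`ξ² ≤ (|ξ|_{vc}^B)²` gives the reverse non-strict inequality for every `C²` test function, hence
also for `ψ`, which is only `C¹` across `0`: glue its two sides by a smooth transition on `[0, ε]`,
whose first two derivatives stay bounded there, and let `ε → 0`.
-/

open MeasureTheory Set Filter Topology

noncomputable section

/-- The set of Rayleigh quotients defining the critical magnetic number `|B|_c`. -/
def BcSet (g ρp ρm : ℝ) : Set ℝ :=
  {r | ∃ φ : ℝ → ℝ, (∃ K, LipschitzWith K φ) ∧ φ (-1) = 0 ∧ φ 1 = 0 ∧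
    ¬ (∀ᵐ y ∂(volume.restrict (Icc (-1:ℝ) 1)), φ y = 0) ∧
    r = g * (ρp - ρm) * (φ 0) ^ 2 / ∫ y in (-1:ℝ)..1, (deriv φ y) ^ 2}

/-- The set of quotients defining the vertical critical frequency `|ξ|_{vc}^B`. -/
def XivcSet (g ρp ρm B : ℝ) : Set ℝ :=
  {r | ∃ φ : ℝ → ℝ, ContDiff ℝ 2 φ ∧ φ (-1) = 0 ∧ φ 1 = 0 ∧
    deriv φ (-1) = 0 ∧ deriv φ 1 = 0 ∧
    0 < g * (ρp - ρm) * (φ 0) ^ 2 - B ^ 2 * ∫ y in (-1:ℝ)..1, (deriv φ y) ^ 2 ∧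
    r = (B ^ 2 * ∫ y in (-1:ℝ)..1, (deriv (deriv φ) y) ^ 2) /
        (g * (ρp - ρm) * (φ 0) ^ 2 - B ^ 2 * ∫ y in (-1:ℝ)..1, (deriv φ y) ^ 2)}

/-- The set of quotients defining the horizontal critical frequency `|ξ|_{hc}^B`. -/
def XihcSet (g ρp ρm B : ℝ) : Set ℝ :=
  {r | ∃ φ : ℝ → ℝ, (∃ K, LipschitzWith K φ) ∧ φ (-1) = 0 ∧ φ 1 = 0 ∧
    ¬ (∀ᵐ y ∂(volume.restrict (Icc (-1:ℝ) 1)), φ y = 0) ∧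
    r = (g * (ρp - ρm) * (φ 0) ^ 2 - B ^ 2 * ∫ y in (-1:ℝ)..1, (deriv φ y) ^ 2) /
        (B ^ 2 * ∫ y in (-1:ℝ)..1, (φ y) ^ 2)}

/-- The fourth-order ODE of the vertical problem, with density `ρ` and viscosity `μ`. -/
def VertODE (ρ μ B ξ lam : ℝ) (f : ℝ → ℝ) (y : ℝ) : Prop :=
  -lam ^ 2 * ρ * (ξ ^ 2 * f y - iteratedDeriv 2 f y) =
    μ * lam * (ξ ^ 4 * f y - 2 * ξ ^ 2 * iteratedDeriv 2 f y + iteratedDeriv 4 f y) +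
      B ^ 2 * (-(ξ ^ 2) * iteratedDeriv 2 f y + iteratedDeriv 4 f y)

/-- The fourth-order ODE of the horizontal problem. -/
def HorizODE (ρ μ B ξ lam : ℝ) (f : ℝ → ℝ) (y : ℝ) : Prop :=
  -lam ^ 2 * ρ * (ξ ^ 2 * f y - iteratedDeriv 2 f y) =
    μ * lam * (ξ ^ 4 * f y - 2 * ξ ^ 2 * iteratedDeriv 2 f y + iteratedDeriv 4 f y) +
      B ^ 2 * (ξ ^ 4 * f y - ξ ^ 2 * iteratedDeriv 2 f y)

/-- `ψ : [-1,1] → ℝ` solves the vertical problem at frequency `ξ` with growth rate `lam`: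
its restrictions to `[-1,0]` and `[0,1]` are `C^n` up to the endpoints (i.e. agree there with
globally `C^n` functions `ψm`, `ψp`), `ψ` and `ψ'` are continuous at `0`, the interior ODEs,
the jump conditions at `0` and the boundary conditions at `±1` hold. -/
def IsVertSol (ρp ρm μp μm g B ξ lam : ℝ) (n : ℕ∞) (ψ : ℝ → ℝ) : Prop :=
  ∃ ψm ψp : ℝ → ℝ,
    ContDiff ℝ n ψm ∧ ContDiff ℝ n ψp ∧
    (∀ y ∈ Icc (-1:ℝ) 0, ψ y = ψm y) ∧
    (∀ y ∈ Icc (0:ℝ) 1, ψ y = ψp y) ∧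
    ψp 0 = ψm 0 ∧
    deriv ψp 0 = deriv ψm 0 ∧
    (∀ y ∈ Ioo (-1:ℝ) 0, VertODE ρm μm B ξ lam ψm y) ∧
    (∀ y ∈ Ioo (0:ℝ) 1, VertODE ρp μp B ξ lam ψp y) ∧
    (μp * lam * (ξ ^ 2 * ψp 0 + iteratedDeriv 2 ψp 0) + B ^ 2 * iteratedDeriv 2 ψp 0) -
        (μm * lam * (ξ ^ 2 * ψm 0 + iteratedDeriv 2 ψm 0) + B ^ 2 * iteratedDeriv 2 ψm 0) = 0 ∧
    (μp * lam * (iteratedDeriv 3 ψp 0 - 3 * ξ ^ 2 * deriv ψp 0) + B ^ 2 * iteratedDeriv 3 ψp 0) -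
        (μm * lam * (iteratedDeriv 3 ψm 0 - 3 * ξ ^ 2 * deriv ψm 0) + B ^ 2 * iteratedDeriv 3 ψm 0) =
      lam ^ 2 * (ρp * deriv ψp 0 - ρm * deriv ψm 0) + g * (ρp - ρm) * ξ ^ 2 * ψ 0 ∧
    ψ (-1) = 0 ∧ ψ 1 = 0 ∧ deriv ψm (-1) = 0 ∧ deriv ψp 1 = 0

/-- `ψ : [-1,1] → ℝ` solves the horizontal problem at frequency `ξ` with growth rate `lam`. -/
def IsHorizSol (ρp ρm μp μm g B ξ lam : ℝ) (n : ℕ∞) (ψ : ℝ → ℝ) : Prop :=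
  ∃ ψm ψp : ℝ → ℝ,
    ContDiff ℝ n ψm ∧ ContDiff ℝ n ψp ∧
    (∀ y ∈ Icc (-1:ℝ) 0, ψ y = ψm y) ∧
    (∀ y ∈ Icc (0:ℝ) 1, ψ y = ψp y) ∧
    ψp 0 = ψm 0 ∧
    deriv ψp 0 = deriv ψm 0 ∧
    (∀ y ∈ Ioo (-1:ℝ) 0, HorizODE ρm μm B ξ lam ψm y) ∧
    (∀ y ∈ Ioo (0:ℝ) 1, HorizODE ρp μp B ξ lam ψp y) ∧
    μp * lam * (ξ ^ 2 * ψp 0 + iteratedDeriv 2 ψp 0) -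
        μm * lam * (ξ ^ 2 * ψm 0 + iteratedDeriv 2 ψm 0) = 0 ∧
    μp * lam * (iteratedDeriv 3 ψp 0 - 3 * ξ ^ 2 * deriv ψp 0) -
        μm * lam * (iteratedDeriv 3 ψm 0 - 3 * ξ ^ 2 * deriv ψm 0) =
      lam ^ 2 * (ρp * deriv ψp 0 - ρm * deriv ψm 0) + g * (ρp - ρm) * ξ ^ 2 * ψ 0 ∧
    ψ (-1) = 0 ∧ ψ 1 = 0 ∧ deriv ψm (-1) = 0 ∧ deriv ψp 1 = 0

theorem hasDerivAt_iteratedDeriv {f : ℝ → ℝ} {n k : ℕ} (hf : ContDiff ℝ n f) (hk : k < n)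
    (y : ℝ) : HasDerivAt (iteratedDeriv k f) (iteratedDeriv (k + 1) f y) y := by
  rw [iteratedDeriv_succ]
  exact ((hf.differentiable_iteratedDeriv k (by exact_mod_cast hk)) y).hasDerivAt

theorem exists_abs_iteratedDeriv_le {f : ℝ → ℝ} {n : ℕ} (hf : ContDiff ℝ n f) (a b : ℝ) :
    ∃ C, ∀ i ≤ n, ∀ x ∈ Icc a b, |iteratedDeriv i f x| ≤ C := by
  obtain ⟨C, hC⟩ : BddAbove (⋃ i ∈ Finset.range (n + 1),
      (fun x => |iteratedDeriv i f x|) '' Icc a b) :=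
    (Finset.range (n + 1)).finite_toSet.bddAbove_biUnion.2 fun i hi =>
      isCompact_Icc.bddAbove_image (hf.continuous_iteratedDeriv i
        (by exact_mod_cast Finset.mem_range_succ_iff.1 hi)).abs.continuousOn
  exact ⟨C, fun i hi x hx => hC (mem_biUnion (Finset.mem_range_succ_iff.2 hi) ⟨x, hx, rfl⟩)⟩

theorem abs_le_mul_pow_succ_of_abs_deriv_le {g g' : ℝ → ℝ} {M y : ℝ} {n : ℕ}
    (hg : ∀ x, HasDerivAt g (g' x) x) (h₀ : g 0 = 0) (hM : 0 ≤ M) (hy : 0 ≤ y)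
    (hb : ∀ x ∈ Icc 0 y, |g' x| ≤ M * x ^ n) : |g y| ≤ M * y ^ (n + 1) := by
  have := (convex_Icc 0 y).norm_image_sub_le_of_norm_hasDerivWithin_le (C := M * y ^ n)
    (fun x _ => (hg x).hasDerivWithinAt)
    (fun x hx => (hb x hx).trans (mul_le_mul_of_nonneg_left (pow_le_pow_left₀ hx.1 hx.2 n) hM))
    (left_mem_Icc.2 hy) (right_mem_Icc.2 hy)
  simpa [h₀, pow_succ, abs_of_nonneg hy, mul_assoc] using this

theorem abs_iteratedDeriv_le_mul_pow {d : ℝ → ℝ} (hd : ContDiff ℝ 2 d) (h₀ : d 0 = 0)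
    (h₁ : deriv d 0 = 0) {M : ℝ} (hM : ∀ x ∈ Icc (0:ℝ) 1, |iteratedDeriv 2 d x| ≤ M) :
    ∀ j ≤ 2, ∀ y ∈ Icc (0:ℝ) 1, |iteratedDeriv j d y| ≤ M * y ^ (2 - j) := by
  have hM₀ : 0 ≤ M := (abs_nonneg _).trans (hM 0 (left_mem_Icc.2 zero_le_one))
  have hd₁ : ∀ y ∈ Icc (0:ℝ) 1, |deriv d y| ≤ M * y ^ 1 := fun y hy =>
    abs_le_mul_pow_succ_of_abs_deriv_le (n := 0)
      (fun x => by
        simpa only [iteratedDeriv_one] using hasDerivAt_iteratedDeriv hd (k := 1) one_lt_two x)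
      h₁ hM₀ hy.1 fun x hx => by simpa using hM x ⟨hx.1, hx.2.trans hy.2⟩
  intro j hj y hy
  interval_cases j
  · simpa using abs_le_mul_pow_succ_of_abs_deriv_le (n := 1)
      (fun x => (hd.differentiable two_ne_zero x).hasDerivAt) h₀ hM₀ hy.1
      fun x hx => hd₁ x ⟨hx.1, hx.2.trans hy.2⟩
  · simpa using hd₁ y hy
  · simpa using hM y hy

theorem tendsto_integral_of_eqOn_of_abs_le {F : ℝ → ℝ → ℝ} {f h : ℝ → ℝ} {a b C : ℝ}
    (ha : a ≤ 0) (hb : 0 < b) (hF : ∀ ε, Continuous (F ε)) (hh : Continuous h)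
    (hleft : ∀ᶠ ε in 𝓝[>] 0, EqOn (F ε) f (Ioo a 0))
    (hright : ∀ᶠ ε in 𝓝[>] 0, EqOn (F ε) h (Ioo ε b))
    (hbound : ∀ᶠ ε in 𝓝[>] 0, ∀ y ∈ Icc 0 ε, |F ε y| ≤ C) :
    Tendsto (fun ε => ∫ y in a..b, F ε y) (𝓝[>] 0)
      (𝓝 ((∫ y in a..0, f y) + ∫ y in 0..b, h y)) := by
  have hmid : Tendsto (fun ε => ∫ y in 0..ε, F ε y) (𝓝[>] 0) (𝓝 0) := by
    refine squeeze_zero_norm' (a := fun ε => C * |ε - 0|) ?_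
      (tendsto_nhdsWithin_of_tendsto_nhds (Continuous.tendsto' (by fun_prop) 0 0 (by simp)))
    filter_upwards [hbound, self_mem_nhdsWithin] with ε hε hpos
    refine intervalIntegral.norm_integral_le_of_norm_le_const fun y hy => ?_
    rw [uIoc_of_le (le_of_lt hpos)] at hy
    exact hε y (Ioc_subset_Icc_self hy)
  have hrest : Tendsto (fun ε => ∫ y in ε..b, h y) (𝓝[>] 0) (𝓝 (∫ y in 0..b, h y)) := by
    have hc : Continuous fun t => ∫ y in t..b, h y := by
      simp_rw [intervalIntegral.integral_symm b]
      exact (intervalIntegral.continuous_primitive (fun _ _ => hh.intervalIntegrable _ _) b).neg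
    exact tendsto_nhdsWithin_of_tendsto_nhds (hc.tendsto 0)
  have hsplit : ∀ᶠ ε in 𝓝[>] 0,
      (∫ y in a..0, f y) + (∫ y in 0..ε, F ε y) + ∫ y in ε..b, h y = ∫ y in a..b, F ε y := by
    filter_upwards [hleft, hright, Ioo_mem_nhdsGT hb] with ε hl hr hε
    have hint p q : IntervalIntegrable (F ε) volume p q := (hF ε).intervalIntegrable p q
    rw [← intervalIntegral.integral_congr_Ioo_of_le ha hl,
      ← intervalIntegral.integral_congr_Ioo_of_le hε.2.le hr,
      intervalIntegral.integral_add_adjacent_intervals (hint a 0) (hint 0 ε),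
      intervalIntegral.integral_add_adjacent_intervals (hint a ε) (hint ε b)]
  simpa using ((tendsto_const_nhds.add hmid).add hrest).congr' hsplit

def smoothGlue (ε : ℝ) (u v : ℝ → ℝ) (y : ℝ) : ℝ :=
  u y + Real.smoothTransition (ε⁻¹ * y) * (v y - u y)

section SmoothGlue

variable {ε : ℝ} {u v : ℝ → ℝ}

theorem smoothGlue_of_nonpos (hε : 0 ≤ ε) {y : ℝ} (hy : y ≤ 0) : smoothGlue ε u v y = u y := by
  simp [smoothGlue, Real.smoothTransition.zero_of_nonpos
    (mul_nonpos_of_nonneg_of_nonpos (inv_nonneg.2 hε) hy)]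

theorem smoothGlue_of_le (hε : 0 < ε) {y : ℝ} (hy : ε ≤ y) : smoothGlue ε u v y = v y := by
  simp [smoothGlue,
    Real.smoothTransition.one_of_one_le ((le_inv_mul_iff₀ hε).2 (by simpa using hy))]

theorem contDiff_smoothGlue {n : ℕ∞} (hu : ContDiff ℝ n u) (hv : ContDiff ℝ n v) :
    ContDiff ℝ n (smoothGlue ε u v) :=
  hu.add ((Real.smoothTransition.contDiff.comp (contDiff_const.mul contDiff_id)).mul (hv.sub hu))

theorem iteratedDeriv_smoothGlue_of_neg (hε : 0 ≤ ε) (k : ℕ) {y : ℝ} (hy : y < 0) :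
    iteratedDeriv k (smoothGlue ε u v) y = iteratedDeriv k u y :=
  Filter.EventuallyEq.iteratedDeriv_eq k <|
    Filter.eventually_of_mem (Iio_mem_nhds hy) fun _ hx => smoothGlue_of_nonpos hε hx.le

theorem iteratedDeriv_smoothGlue_of_lt (hε : 0 < ε) (k : ℕ) {y : ℝ} (hy : ε < y) :
    iteratedDeriv k (smoothGlue ε u v) y = iteratedDeriv k v y :=
  Filter.EventuallyEq.iteratedDeriv_eq k <|
    Filter.eventually_of_mem (Ioi_mem_nhds hy) fun _ hx => smoothGlue_of_le hε hx.le

theorem exists_abs_iteratedDeriv_smoothGlue_le (hu : ContDiff ℝ 2 u) (hv : ContDiff ℝ 2 v)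
    (h₀ : v 0 = u 0) (h₁ : deriv v 0 = deriv u 0) {k : ℕ} (hk : k ≤ 2) :
    ∃ C, ∀ ε ∈ Ioc (0:ℝ) 1, ∀ y ∈ Icc 0 ε, |iteratedDeriv k (smoothGlue ε u v) y| ≤ C := by
  set θ := Real.smoothTransition
  have hθ : ContDiff ℝ 2 θ := Real.smoothTransition.contDiff
  have hd : ContDiff ℝ 2 (fun y => v y - u y) := hv.sub hu
  obtain ⟨A, hA⟩ := exists_abs_iteratedDeriv_le hu 0 1
  obtain ⟨T, hT⟩ := exists_abs_iteratedDeriv_le hθ 0 1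
  obtain ⟨M, hM⟩ := exists_abs_iteratedDeriv_le hd 0 1
  have hT₀ : 0 ≤ T := (abs_nonneg _).trans (hT 0 (by norm_num) 0 (left_mem_Icc.2 zero_le_one))
  have hM₀ : 0 ≤ M := (abs_nonneg _).trans (hM 0 (by norm_num) 0 (left_mem_Icc.2 zero_le_one))
  have hflat := abs_iteratedDeriv_le_mul_pow hd (by simp [h₀])
    (by rw [deriv_fun_sub (hv.differentiable two_ne_zero 0) (hu.differentiable two_ne_zero 0),
      h₁, sub_self]) (hM 2 le_rfl)
  refine ⟨A + ∑ i ∈ Finset.range (k + 1), k.choose i * (T * M), fun ε hε y hy => ?_⟩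
  have hy₁ : y ∈ Icc (0:ℝ) 1 := ⟨hy.1, hy.2.trans hε.2⟩
  have hε₀ : 0 ≤ ε⁻¹ := inv_nonneg.2 hε.1.le
  have hyε : ε⁻¹ * y ∈ Icc (0:ℝ) 1 :=
    ⟨mul_nonneg hε₀ hy.1, by rw [inv_mul_le_iff₀ hε.1]; simpa using hy.2⟩
  have hθε : ContDiff ℝ 2 (fun y => θ (ε⁻¹ * y)) := hθ.comp (contDiff_const.mul contDiff_id)
  have hk' : (k : WithTop ℕ∞) ≤ 2 := by exact_mod_cast hk
  have hterm : ∀ i ∈ Finset.range (k + 1),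
      |(k.choose i : ℝ) * iteratedDeriv i (fun y => θ (ε⁻¹ * y)) y
        * iteratedDeriv (k - i) (fun y => v y - u y) y| ≤ k.choose i * (T * M) := by
    intro i hi
    have hik : i ≤ k := Finset.mem_range_succ_iff.1 hi
    have hεi : 0 ≤ ε⁻¹ ^ i := pow_nonneg hε₀ i
    -- the factor `ε⁻¹ ^ i` from rescaling `θ` is absorbed by the vanishing of `v - u` at `0`
    have hscale : ε⁻¹ ^ i * y ^ (2 - (k - i)) ≤ 1 := calc
      ε⁻¹ ^ i * y ^ (2 - (k - i)) ≤ ε⁻¹ ^ i * ε ^ i := mul_le_mul_of_nonneg_left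
        ((pow_le_pow_of_le_one hy₁.1 hy₁.2 (by omega)).trans (pow_le_pow_left₀ hy.1 hy.2 i)) hεi
      _ = 1 := by rw [← mul_pow, inv_mul_cancel₀ hε.1.ne', one_pow]
    rw [iteratedDeriv_comp_const_mul (hθ.of_le (by exact_mod_cast hik.trans hk)), abs_mul,
      abs_mul, abs_mul, abs_of_nonneg (Nat.cast_nonneg _), abs_of_nonneg hεi]
    have hcoef : 0 ≤ (k.choose i : ℝ) * (ε⁻¹ ^ i * T) :=
      mul_nonneg (Nat.cast_nonneg _) (mul_nonneg hεi hT₀)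
    calc (k.choose i : ℝ) * (ε⁻¹ ^ i * |iteratedDeriv i θ (ε⁻¹ * y)|)
          * |iteratedDeriv (k - i) (fun y => v y - u y) y|
        ≤ k.choose i * (ε⁻¹ ^ i * T) * (M * y ^ (2 - (k - i))) := by
          gcongr
          · exact hT i (hik.trans hk) _ hyε
          · exact hflat _ (by omega) y hy₁
      _ = k.choose i * (T * M) * (ε⁻¹ ^ i * y ^ (2 - (k - i))) := by ring
      _ ≤ k.choose i * (T * M) :=
        mul_le_of_le_one_right (mul_nonneg (Nat.cast_nonneg _) (mul_nonneg hT₀ hM₀)) hscale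
  show |iteratedDeriv k (fun y => u y + θ (ε⁻¹ * y) * (v y - u y)) y| ≤ _
  rw [iteratedDeriv_fun_add (hu.contDiffAt.of_le hk') ((hθε.mul hd).contDiffAt.of_le hk'),
    iteratedDeriv_fun_mul (hθε.contDiffAt.of_le hk') (hd.contDiffAt.of_le hk')]
  exact (abs_add_le _ _).trans (add_le_add (hA k hk y hy₁)
    ((Finset.abs_sum_le_sum_abs _ _).trans (Finset.sum_le_sum hterm)))

theorem tendsto_integral_sq_iteratedDeriv_smoothGlue (hu : ContDiff ℝ 2 u) (hv : ContDiff ℝ 2 v)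
    (h₀ : v 0 = u 0) (h₁ : deriv v 0 = deriv u 0) {k : ℕ} (hk : k ≤ 2) {a b : ℝ} (ha : a ≤ 0)
    (hb : 0 < b) :
    Tendsto (fun ε => ∫ y in a..b, iteratedDeriv k (smoothGlue ε u v) y ^ 2) (𝓝[>] 0)
      (𝓝 ((∫ y in a..0, iteratedDeriv k u y ^ 2) + ∫ y in 0..b, iteratedDeriv k v y ^ 2)) := by
  obtain ⟨C, hC⟩ := exists_abs_iteratedDeriv_smoothGlue_le hu hv h₀ h₁ hk
  have hk' : (k : WithTop ℕ∞) ≤ 2 := by exact_mod_cast hk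
  refine tendsto_integral_of_eqOn_of_abs_le (C := C ^ 2) ha hb
    (fun ε => ((contDiff_smoothGlue hu hv).continuous_iteratedDeriv k hk').pow 2)
    ((hv.continuous_iteratedDeriv k hk').pow 2) ?_ ?_ ?_
  · filter_upwards [self_mem_nhdsWithin] with ε hε y hy
    simp only [iteratedDeriv_smoothGlue_of_neg (le_of_lt hε) k hy.2]
  · filter_upwards [self_mem_nhdsWithin] with ε hε y hy
    simp only [iteratedDeriv_smoothGlue_of_lt hε k hy.1]
  · filter_upwards [Ioc_mem_nhdsGT one_pos] with ε hε y hy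
    rw [abs_pow]
    exact pow_le_pow_left₀ (abs_nonneg _) (hC ε hε y hy) 2

end SmoothGlue

section Variational

variable {g ρp ρm B c : ℝ}

theorem nonneg_of_mem_XivcSet {r : ℝ} (hr : r ∈ XivcSet g ρp ρm B) : 0 ≤ r := by
  obtain ⟨φ, -, -, -, -, -, hD, rfl⟩ := hr
  exact div_nonneg (mul_nonneg (sq_nonneg B)
    (intervalIntegral.integral_nonneg (by norm_num) fun _ _ => sq_nonneg _)) hD.le

theorem mul_le_of_le_sInf_XivcSet (hc₀ : 0 ≤ c) (hc : c ≤ sInf (XivcSet g ρp ρm B))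
    {φ : ℝ → ℝ} (hφ : ContDiff ℝ 2 φ) (h₁ : φ (-1) = 0) (h₂ : φ 1 = 0)
    (h₃ : deriv φ (-1) = 0) (h₄ : deriv φ 1 = 0) :
    c * (g * (ρp - ρm) * φ 0 ^ 2 - B ^ 2 * ∫ y in (-1:ℝ)..1, deriv φ y ^ 2)
      ≤ B ^ 2 * ∫ y in (-1:ℝ)..1, deriv (deriv φ) y ^ 2 := by
  rcases le_or_gt (g * (ρp - ρm) * φ 0 ^ 2 - B ^ 2 * ∫ y in (-1:ℝ)..1, deriv φ y ^ 2) 0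
    with hD | hD
  · exact (mul_nonpos_of_nonneg_of_nonpos hc₀ hD).trans (mul_nonneg (sq_nonneg B)
      (intervalIntegral.integral_nonneg (by norm_num) fun _ _ => sq_nonneg _))
  · rw [← le_div_iff₀ hD]
    exact hc.trans (csInf_le ⟨0, fun _ => nonneg_of_mem_XivcSet⟩ ⟨φ, hφ, h₁, h₂, h₃, h₄, hD, rfl⟩)

theorem mul_le_of_le_sInf_XivcSet_of_piecewise (hc₀ : 0 ≤ c)
    (hc : c ≤ sInf (XivcSet g ρp ρm B)) {u v : ℝ → ℝ} (hu : ContDiff ℝ 2 u)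
    (hv : ContDiff ℝ 2 v) (h₀ : v 0 = u 0) (h₁ : deriv v 0 = deriv u 0) (hu₀ : u (-1) = 0)
    (hu₁ : deriv u (-1) = 0) (hv₀ : v 1 = 0) (hv₁ : deriv v 1 = 0) :
    c * (g * (ρp - ρm) * u 0 ^ 2
        - B ^ 2 * ((∫ y in (-1:ℝ)..0, deriv u y ^ 2) + ∫ y in (0:ℝ)..1, deriv v y ^ 2))
      ≤ B ^ 2 * ((∫ y in (-1:ℝ)..0, iteratedDeriv 2 u y ^ 2)
        + ∫ y in (0:ℝ)..1, iteratedDeriv 2 v y ^ 2) := by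
  have hglued : ∀ᶠ ε in 𝓝[>] 0,
      c * (g * (ρp - ρm) * u 0 ^ 2
          - B ^ 2 * ∫ y in (-1:ℝ)..1, iteratedDeriv 1 (smoothGlue ε u v) y ^ 2)
        ≤ B ^ 2 * ∫ y in (-1:ℝ)..1, iteratedDeriv 2 (smoothGlue ε u v) y ^ 2 := by
    filter_upwards [Ioo_mem_nhdsGT one_pos] with ε hε
    have hdm := iteratedDeriv_smoothGlue_of_neg (u := u) (v := v) hε.1.le 1
      (by norm_num : (-1:ℝ) < 0)
    have hdp := iteratedDeriv_smoothGlue_of_lt (u := u) (v := v) hε.1 1 hε.2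
    simp only [iteratedDeriv_one] at hdm hdp
    simpa only [smoothGlue_of_nonpos hε.1.le le_rfl, iteratedDeriv_succ, iteratedDeriv_zero] using
      mul_le_of_le_sInf_XivcSet hc₀ hc (contDiff_smoothGlue hu hv)
        ((smoothGlue_of_nonpos hε.1.le (by norm_num)).trans hu₀)
        ((smoothGlue_of_le hε.1 hε.2.le).trans hv₀) (hdm.trans hu₁) (hdp.trans hv₁)
  have hlim k (hk : k ≤ 2) := tendsto_integral_sq_iteratedDeriv_smoothGlue hu hv h₀ h₁ hk
    (by norm_num : (-1:ℝ) ≤ 0) one_pos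
  simpa only [iteratedDeriv_one] using le_of_tendsto_of_tendsto
    ((tendsto_const_nhds.sub ((hlim 1 one_le_two).const_mul _)).const_mul c)
    ((hlim 2 le_rfl).const_mul _) hglued

end Variational

section VerticalEnergy

variable (ρ μ B ξ lam : ℝ)

/-- The boundary term of `∫ f · (VertODE)` after integrating by parts; its two brackets are the
quantities whose jumps across `0` the interface conditions prescribe. -/
def vertFlux (f : ℝ → ℝ) (y : ℝ) : ℝ :=
  f y * (μ * lam * (iteratedDeriv 3 f y - 3 * ξ ^ 2 * deriv f y) + B ^ 2 * iteratedDeriv 3 f y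
      - lam ^ 2 * ρ * deriv f y)
    - deriv f y * (μ * lam * (ξ ^ 2 * f y + iteratedDeriv 2 f y) + B ^ 2 * iteratedDeriv 2 f y)
    - B ^ 2 * ξ ^ 2 * f y * deriv f y

def vertEnergyDensity (f : ℝ → ℝ) (y : ℝ) : ℝ :=
  lam ^ 2 * ρ * (ξ ^ 2 * f y ^ 2 + deriv f y ^ 2)
    + μ * lam * ((iteratedDeriv 2 f y + ξ ^ 2 * f y) ^ 2 + 4 * ξ ^ 2 * deriv f y ^ 2)
    + B ^ 2 * (ξ ^ 2 * deriv f y ^ 2 + iteratedDeriv 2 f y ^ 2)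

variable {ρ μ B ξ lam} {f : ℝ → ℝ}

theorem vertFlux_eq_zero {y : ℝ} (h₀ : f y = 0) (h₁ : deriv f y = 0) :
    vertFlux ρ μ B ξ lam f y = 0 := by
  simp [vertFlux, h₀, h₁]

theorem hasDerivAt_vertFlux (hf : ContDiff ℝ 4 f) {y : ℝ} (hode : VertODE ρ μ B ξ lam f y) :
    HasDerivAt (vertFlux ρ μ B ξ lam f) (-vertEnergyDensity ρ μ B ξ lam f y) y := by
  have d₀ : HasDerivAt f (deriv f y) y := (hf.differentiable (by norm_num) y).hasDerivAt
  have d₁ : HasDerivAt (deriv f) (iteratedDeriv 2 f y) y := by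
    simpa only [iteratedDeriv_one] using hasDerivAt_iteratedDeriv hf (k := 1) (by norm_num) y
  have d₂ := hasDerivAt_iteratedDeriv hf (k := 2) (by norm_num) y
  have d₃ := hasDerivAt_iteratedDeriv hf (k := 3) (by norm_num) y
  refine (((d₀.mul ((((d₃.sub (d₁.const_mul (3 * ξ ^ 2))).const_mul (μ * lam)).add
      (d₃.const_mul (B ^ 2))).sub (d₁.const_mul (lam ^ 2 * ρ)))).sub
    (d₁.mul ((((d₀.const_mul (ξ ^ 2)).add d₂).const_mul (μ * lam)).add
      (d₂.const_mul (B ^ 2))))).sub ((d₀.const_mul (B ^ 2 * ξ ^ 2)).mul d₁)).congr_deriv ?_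
  simp only [vertEnergyDensity, Pi.add_apply, Pi.sub_apply, Nat.reduceAdd]
  unfold VertODE at hode
  -- the derivative of the flux plus the energy density is `f` times the residual of the ODE
  linear_combination (-f y) * hode

theorem continuous_vertFlux (hf : ContDiff ℝ 4 f) : Continuous (vertFlux ρ μ B ξ lam f) := by
  have c₀ := hf.continuous
  have c₁ := hf.continuous_deriv (by norm_num)
  have c₂ := hf.continuous_iteratedDeriv 2 (by norm_num)
  have c₃ := hf.continuous_iteratedDeriv 3 (by norm_num)
  unfold vertFlux
  fun_prop

theorem continuous_vertEnergyDensity (hf : ContDiff ℝ 2 f) :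
    Continuous (vertEnergyDensity ρ μ B ξ lam f) := by
  have c₀ := hf.continuous
  have c₁ := hf.continuous_deriv (by norm_num)
  have c₂ := hf.continuous_iteratedDeriv 2 le_rfl
  unfold vertEnergyDensity
  fun_prop

theorem integral_vertEnergyDensity (hf : ContDiff ℝ 4 f) {a b : ℝ} (hab : a ≤ b)
    (hode : ∀ y ∈ Ioo a b, VertODE ρ μ B ξ lam f y) :
    ∫ y in a..b, vertEnergyDensity ρ μ B ξ lam f y =
      vertFlux ρ μ B ξ lam f a - vertFlux ρ μ B ξ lam f b := by
  have := intervalIntegral.integral_eq_sub_of_hasDerivAt_of_le hab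
    (continuous_vertFlux hf).continuousOn (fun y hy => hasDerivAt_vertFlux hf (hode y hy))
    ((continuous_vertEnergyDensity (hf.of_le (by norm_num))).neg.intervalIntegrable a b)
  rw [intervalIntegral.integral_neg] at this
  linarith

theorem le_integral_vertEnergyDensity (hf : ContDiff ℝ 2 f) {a b : ℝ} (hab : a ≤ b)
    (hρ : 0 ≤ ρ) (hμ : 0 ≤ μ) (hlam : 0 ≤ lam) :
    lam ^ 2 * ξ ^ 2 * (ρ * ∫ y in a..b, f y ^ 2)
        + B ^ 2 * (ξ ^ 2 * (∫ y in a..b, deriv f y ^ 2) + ∫ y in a..b, iteratedDeriv 2 f y ^ 2)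
      ≤ ∫ y in a..b, vertEnergyDensity ρ μ B ξ lam f y := by
  have c₀ : Continuous f := hf.continuous
  have c₁ : Continuous (deriv f) := hf.continuous_deriv (by norm_num)
  have c₂ : Continuous (iteratedDeriv 2 f) := hf.continuous_iteratedDeriv 2 le_rfl
  calc _ = ∫ y in a..b, (lam ^ 2 * ξ ^ 2 * (ρ * f y ^ 2)
        + B ^ 2 * (ξ ^ 2 * deriv f y ^ 2 + iteratedDeriv 2 f y ^ 2)) := by
        rw [intervalIntegral.integral_add, intervalIntegral.integral_const_mul,
          intervalIntegral.integral_const_mul, intervalIntegral.integral_const_mul,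
          intervalIntegral.integral_add, intervalIntegral.integral_const_mul]
        all_goals exact Continuous.intervalIntegrable (by fun_prop) _ _
    _ ≤ _ := by
      refine intervalIntegral.integral_mono_on hab (Continuous.intervalIntegrable (by fun_prop) _ _)
        ((continuous_vertEnergyDensity hf).intervalIntegrable _ _) fun y _ => ?_
      have : 0 ≤ lam ^ 2 * ρ * deriv f y ^ 2
          + μ * lam * ((iteratedDeriv 2 f y + ξ ^ 2 * f y) ^ 2 + 4 * ξ ^ 2 * deriv f y ^ 2) := by
        positivity
      unfold vertEnergyDensity
      linarith

end VerticalEnergy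

theorem integral_vertEnergyDensity_add_eq {ρp ρm μp μm g B ξ lam : ℝ} {ψm ψp : ℝ → ℝ}
    (hm : ContDiff ℝ 4 ψm) (hp : ContDiff ℝ 4 ψp)
    (h₀ : ψp 0 = ψm 0) (h₁ : deriv ψp 0 = deriv ψm 0)
    (hodem : ∀ y ∈ Ioo (-1:ℝ) 0, VertODE ρm μm B ξ lam ψm y)
    (hodep : ∀ y ∈ Ioo (0:ℝ) 1, VertODE ρp μp B ξ lam ψp y)
    (hJ₁ : (μp * lam * (ξ ^ 2 * ψp 0 + iteratedDeriv 2 ψp 0) + B ^ 2 * iteratedDeriv 2 ψp 0) -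
        (μm * lam * (ξ ^ 2 * ψm 0 + iteratedDeriv 2 ψm 0) + B ^ 2 * iteratedDeriv 2 ψm 0) = 0)
    (hJ₂ : (μp * lam * (iteratedDeriv 3 ψp 0 - 3 * ξ ^ 2 * deriv ψp 0)
          + B ^ 2 * iteratedDeriv 3 ψp 0) -
        (μm * lam * (iteratedDeriv 3 ψm 0 - 3 * ξ ^ 2 * deriv ψm 0)
          + B ^ 2 * iteratedDeriv 3 ψm 0) =
      lam ^ 2 * (ρp * deriv ψp 0 - ρm * deriv ψm 0) + g * (ρp - ρm) * ξ ^ 2 * ψm 0)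
    (hm₀ : ψm (-1) = 0) (hm₁ : deriv ψm (-1) = 0) (hp₀ : ψp 1 = 0) (hp₁ : deriv ψp 1 = 0) :
    (∫ y in (-1:ℝ)..0, vertEnergyDensity ρm μm B ξ lam ψm y)
        + ∫ y in (0:ℝ)..1, vertEnergyDensity ρp μp B ξ lam ψp y
      = g * (ρp - ρm) * ξ ^ 2 * ψm 0 ^ 2 := by
  rw [integral_vertEnergyDensity hm (by norm_num) hodem,
    integral_vertEnergyDensity hp (by norm_num) hodep, vertFlux_eq_zero hm₀ hm₁,
    vertFlux_eq_zero hp₀ hp₁]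
  simp only [vertFlux, h₀, h₁] at hJ₁ hJ₂ ⊢
  linear_combination ψm 0 * hJ₂ - deriv ψm 0 * hJ₁

theorem add_mul_integral_sq_pos {ψ ψm ψp : ℝ → ℝ} {ρm ρp y₀ : ℝ} (hρm : 0 < ρm) (hρp : 0 < ρp)
    (hm : Continuous ψm) (hp : Continuous ψp) (hψm : ∀ y ∈ Icc (-1:ℝ) 0, ψ y = ψm y)
    (hψp : ∀ y ∈ Icc (0:ℝ) 1, ψ y = ψp y) (hy₀ : y₀ ∈ Icc (-1:ℝ) 1) (hne : ψ y₀ ≠ 0) :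
    0 < ρm * (∫ y in (-1:ℝ)..0, ψm y ^ 2) + ρp * ∫ y in (0:ℝ)..1, ψp y ^ 2 := by
  have hIm : 0 ≤ ∫ y in (-1:ℝ)..0, ψm y ^ 2 :=
    intervalIntegral.integral_nonneg (by norm_num) fun _ _ => sq_nonneg _
  have hIp : 0 ≤ ∫ y in (0:ℝ)..1, ψp y ^ 2 :=
    intervalIntegral.integral_nonneg (by norm_num) fun _ _ => sq_nonneg _
  rcases le_total y₀ 0 with hy | hy
  · have := intervalIntegral.integral_pos (by norm_num) (hm.pow 2).continuousOn
      (fun _ _ => sq_nonneg _)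
      ⟨y₀, ⟨hy₀.1, hy⟩, by simpa [← hψm y₀ ⟨hy₀.1, hy⟩] using sq_pos_of_ne_zero hne⟩
    positivity
  · have := intervalIntegral.integral_pos (by norm_num) (hp.pow 2).continuousOn
      (fun _ _ => sq_nonneg _)
      ⟨y₀, ⟨hy, hy₀.2⟩, by simpa [← hψp y₀ ⟨hy, hy₀.2⟩] using sq_pos_of_ne_zero hne⟩
    positivity

theorem vertical_no_growing_mode_of_low_frequency_general
    (ρp ρm μp μm g B xivc : ℝ)
    (hρm : 0 < ρm) (hρ : ρm < ρp) (hμp : 0 < μp) (hμm : 0 < μm)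
    (hxivcsq : xivc ^ 2 = sInf (XivcSet g ρp ρm B))
    (ξ : ℝ) (hξ : ξ ≠ 0) (hξle : |ξ| ≤ xivc) :
    ∀ lam : ℝ, 0 < lam → ∀ ψ : ℝ → ℝ,
      IsVertSol ρp ρm μp μm g B ξ lam 4 ψ → ∀ y ∈ Icc (-1:ℝ) 1, ψ y = 0 := by
  intro lam hlam ψ ⟨ψm, ψp, hm, hp, hψm, hψp, h₀, h₁, hodem, hodep, hJ₁, hJ₂, hψl, hψr, hm₁, hp₁⟩
  replace hm : ContDiff ℝ 4 ψm := by exact_mod_cast hm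
  replace hp : ContDiff ℝ 4 ψp := by exact_mod_cast hp
  have hm₀ : ψm (-1) = 0 := hψm (-1) (by norm_num) ▸ hψl
  have hp₀ : ψp 1 = 0 := hψp 1 (by norm_num) ▸ hψr
  rw [hψp 0 (by norm_num), h₀] at hJ₂
  by_contra! ⟨y₀, hy₀, hne⟩
  have hρp : 0 < ρp := hρm.trans hρ
  have hkinetic := add_mul_integral_sq_pos hρm hρp hm.continuous hp.continuous hψm hψp hy₀ hne
  have henergy := integral_vertEnergyDensity_add_eq hm hp h₀ h₁ hodem hodep hJ₁ hJ₂ hm₀ hm₁ hp₀ hp₁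
  have hlm := le_integral_vertEnergyDensity (B := B) (ξ := ξ) (hm.of_le (by norm_num))
    (by norm_num : (-1:ℝ) ≤ 0) hρm.le hμm.le hlam.le
  have hlp := le_integral_vertEnergyDensity (B := B) (ξ := ξ) (hp.of_le (by norm_num))
    (by norm_num : (0:ℝ) ≤ 1) hρp.le hμp.le hlam.le
  have hξsq : ξ ^ 2 ≤ sInf (XivcSet g ρp ρm B) :=
    hxivcsq ▸ sq_abs ξ ▸ pow_le_pow_left₀ (abs_nonneg ξ) hξle 2
  have hvar := mul_le_of_le_sInf_XivcSet_of_piecewise (sq_nonneg ξ) hξsq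
    (hm.of_le (by norm_num)) (hp.of_le (by norm_num)) h₀ h₁ hm₀ hm₁ hp₀ hp₁
  have hξ₂ : 0 < ξ ^ 2 := by positivity
  linarith [mul_pos (mul_pos (pow_pos hlam 2) hξ₂) hkinetic]

/-- if `0 < |B| < |B|_c` and `|ξ| ≤ |ξ|_{vc}^B` then for every `λ > 0` every
solution of the vertical problem vanishes identically on `[-1,1]`. -/
theorem vertical_no_growing_mode_of_low_frequency
    (ρp ρm μp μm g B Bc xivc : ℝ)
    (hρm : 0 < ρm) (hρ : ρm < ρp) (hμp : 0 < μp) (hμm : 0 < μm) (hg : 0 < g)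
    (hB : B ≠ 0) (hBc : 0 < Bc) (hBcsq : Bc ^ 2 = sSup (BcSet g ρp ρm))
    (hBlt : |B| < Bc)
    (hxivc0 : 0 ≤ xivc) (hxivcsq : xivc ^ 2 = sInf (XivcSet g ρp ρm B))
    (ξ : ℝ) (hξ : ξ ≠ 0) (hξle : |ξ| ≤ xivc) :
    ∀ lam : ℝ, 0 < lam → ∀ ψ : ℝ → ℝ,
      IsVertSol ρp ρm μp μm g B ξ lam 4 ψ → ∀ y ∈ Icc (-1:ℝ) 1, ψ y = 0 :=
  vertical_no_growing_mode_of_low_frequency_general ρp ρm μp μm g B xivc hρm hρ hμp hμm hxivcsq ξ hξ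
    hξle
end
end

section
/- Every nontrivial solution of the horizontal problem has growth rate vanishing with the frequency: if ψ is a nontrivial solution of the horizontal problem at frequency ξ ≠ 0 with growth rate λ > 0, then λ² ≤ g[ρ]|ξ| / ρ₊. -/
open MeasureTheory Set Filter Topology

noncomputable section

/-!
Multiplying the equation on each layer by `ψ` and integrating by parts gives an energy identity:
the kinetic energy `λ² ∫ ρ (ξ²ψ² + ψ'²)`, the viscous dissipation and the magnetic energy add up to
the gravitational term `g[ρ]ξ²ψ(0)²` released at the interface. Dropping all but the kinetic energy
of the upper layer and bounding `|ξ| ψ(0)² ≤ ∫₀¹ (ξ²ψ² + ψ'²)` (a trace inequality, from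
`ψ(1) = 0`) yields `λ² ρ₊ ≤ g[ρ]|ξ|`, provided the upper energy is positive; if it vanished then
`ψ(0) = 0`, so the whole energy would vanish and `ψ` would be trivial.
-/

theorem hasDerivAt_iteratedDeriv_of_contDiff {𝕜 F : Type*} [NontriviallyNormedField 𝕜]
    [NormedAddCommGroup F] [NormedSpace 𝕜 F] {f : 𝕜 → F} {n k : ℕ} (hf : ContDiff 𝕜 n f)
    (hk : k < n) (x : 𝕜) : HasDerivAt (iteratedDeriv k f) (iteratedDeriv (k + 1) f x) x := by
  rw [iteratedDeriv_succ]
  exact (hf.differentiable_iteratedDeriv k (by exact_mod_cast hk) x).hasDerivAt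

def sobolevEnergy (ξ : ℝ) (f : ℝ → ℝ) (a b : ℝ) : ℝ :=
  ∫ y in a..b, (ξ ^ 2 * f y ^ 2 + deriv f y ^ 2)

theorem sobolevEnergy_nonneg (ξ : ℝ) (f : ℝ → ℝ) {a b : ℝ} (hab : a ≤ b) :
    0 ≤ sobolevEnergy ξ f a b :=
  intervalIntegral.integral_nonneg hab fun _ _ => by positivity

theorem sobolevEnergy_abs (ξ : ℝ) (f : ℝ → ℝ) (a b : ℝ) :
    sobolevEnergy |ξ| f a b = sobolevEnergy ξ f a b := by
  simp only [sobolevEnergy, sq_abs]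

theorem sobolevEnergy_pos {ξ : ℝ} (hξ : ξ ≠ 0) {f : ℝ → ℝ} (hf : ContDiff ℝ 1 f) {a b c : ℝ}
    (hab : a < b) (hc : c ∈ Icc a b) (hfc : f c ≠ 0) : 0 < sobolevEnergy ξ f a b := by
  have hcont : Continuous fun y => ξ ^ 2 * f y ^ 2 + deriv f y ^ 2 := by
    have := hf.continuous_deriv le_rfl
    fun_prop
  simpa only [sobolevEnergy, Pi.zero_apply, intervalIntegral.integral_zero] using
    intervalIntegral.integral_lt_integral_of_continuousOn_of_le_of_exists_lt (f := 0) hab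
      continuousOn_const hcont.continuousOn (fun y _ => by positivity) ⟨c, hc, by positivity⟩

theorem sobolevEnergy_pos_or_pos {ξ : ℝ} (hξ : ξ ≠ 0) {f fl fr : ℝ → ℝ} (hr : ContDiff ℝ 1 fr)
    (hl : ContDiff ℝ 1 fl) {a b c : ℝ} (hab : a < b) (hbc : b < c) (hfr : EqOn f fr (Icc b c))
    (hfl : EqOn f fl (Icc a b)) (hf : ∃ y ∈ Icc a c, f y ≠ 0) :
    0 < sobolevEnergy ξ fr b c ∨ 0 < sobolevEnergy ξ fl a b := by
  obtain ⟨y, hy, hfy⟩ := hf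
  rcases le_total y b with hyb | hby
  · exact Or.inr <| sobolevEnergy_pos hξ hl hab ⟨hy.1, hyb⟩ (hfl ⟨hy.1, hyb⟩ ▸ hfy)
  · exact Or.inl <| sobolevEnergy_pos hξ hr hbc ⟨hby, hy.2⟩ (hfr ⟨hby, hy.2⟩ ▸ hfy)

/-- Integrate `0 ≤ (c f + f')²`, whose cross term `2 c f f'` is the derivative of `c f²`. -/
theorem mul_sub_sq_le_sobolevEnergy {f : ℝ → ℝ} (hf : ContDiff ℝ 1 f) {a b : ℝ} (hab : a ≤ b)
    (c : ℝ) : c * (f a ^ 2 - f b ^ 2) ≤ sobolevEnergy c f a b := by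
  have hf' : Continuous (deriv f) := hf.continuous_deriv le_rfl
  have hf₀ : Continuous f := hf.continuous
  have hderiv : ∀ y, HasDerivAt (fun y => -(c * f y ^ 2)) (-(c * (2 * f y * deriv f y))) y :=
    fun y => (((hf.differentiable one_ne_zero y).hasDerivAt.pow 2).const_mul c).neg.congr_deriv
      (by ring)
  calc c * (f a ^ 2 - f b ^ 2) = ∫ y in a..b, -(c * (2 * f y * deriv f y)) := by
        rw [intervalIntegral.integral_eq_sub_of_hasDerivAt (fun y _ => hderiv y)
          (by apply Continuous.intervalIntegrable; fun_prop)]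
        ring
    _ ≤ sobolevEnergy c f a b :=
        intervalIntegral.integral_mono_on hab (by apply Continuous.intervalIntegrable; fun_prop)
          (by apply Continuous.intervalIntegrable; fun_prop)
          fun y _ => by nlinarith [sq_nonneg (c * f y + deriv f y)]

/-- Along a solution of `HorizODE` its derivative is the energy density; its jump across the
interface is the combination of the bracketed quantities in the interface conditions. -/
def horizFlux (ρ μ B ξ lam : ℝ) (f : ℝ → ℝ) (y : ℝ) : ℝ :=
  f y * ((lam ^ 2 * ρ + B ^ 2 * ξ ^ 2) * deriv f y
      - μ * lam * (iteratedDeriv 3 f y - 3 * ξ ^ 2 * deriv f y))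
    + deriv f y * (μ * lam * (ξ ^ 2 * f y + iteratedDeriv 2 f y))

def horizEnergyDensity (ρ μ B ξ lam : ℝ) (f : ℝ → ℝ) (y : ℝ) : ℝ :=
  (lam ^ 2 * ρ + B ^ 2 * ξ ^ 2) * (ξ ^ 2 * f y ^ 2 + deriv f y ^ 2)
    + μ * lam * ((iteratedDeriv 2 f y + ξ ^ 2 * f y) ^ 2 + 4 * ξ ^ 2 * deriv f y ^ 2)

section HorizontalEnergy

variable {ρ μ B ξ lam a b : ℝ} {f : ℝ → ℝ}

theorem hasDerivAt_horizFlux (hf : ContDiff ℝ 4 f) {y : ℝ} (hy : HorizODE ρ μ B ξ lam f y) :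
    HasDerivAt (horizFlux ρ μ B ξ lam f) (horizEnergyDensity ρ μ B ξ lam f y) y := by
  have d0 := hasDerivAt_iteratedDeriv_of_contDiff hf (k := 0) (by norm_num) y
  have d1 := hasDerivAt_iteratedDeriv_of_contDiff hf (k := 1) (by norm_num) y
  have d2 := hasDerivAt_iteratedDeriv_of_contDiff hf (k := 2) (by norm_num) y
  have d3 := hasDerivAt_iteratedDeriv_of_contDiff hf (k := 3) (by norm_num) y
  simp only [iteratedDeriv_zero, iteratedDeriv_one, Nat.reduceAdd] at d0 d1 d2 d3
  have h := (d0.mul ((d1.const_mul (lam ^ 2 * ρ + B ^ 2 * ξ ^ 2)).sub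
      ((d3.sub (d1.const_mul (3 * ξ ^ 2))).const_mul (μ * lam)))).add
    (d1.mul (((d0.const_mul (ξ ^ 2)).add d2).const_mul (μ * lam)))
  simp only [Pi.add_apply, Pi.sub_apply] at h
  unfold HorizODE at hy
  exact h.congr_deriv (by unfold horizEnergyDensity; linear_combination f y * hy)

theorem continuous_horizFlux (hf : ContDiff ℝ 3 f) : Continuous (horizFlux ρ μ B ξ lam f) := by
  have := hf.continuous_deriv (by norm_num)
  have := hf.continuous_iteratedDeriv 2 (by norm_num)
  have := hf.continuous_iteratedDeriv 3 le_rfl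
  unfold horizFlux
  fun_prop

theorem continuous_horizEnergyDensity (hf : ContDiff ℝ 2 f) :
    Continuous (horizEnergyDensity ρ μ B ξ lam f) := by
  have := hf.continuous_deriv (by norm_num)
  have := hf.continuous_iteratedDeriv 2 le_rfl
  unfold horizEnergyDensity
  fun_prop

theorem integral_horizEnergyDensity (hf : ContDiff ℝ 4 f) (hab : a ≤ b)
    (hODE : ∀ y ∈ Ioo a b, HorizODE ρ μ B ξ lam f y) :
    ∫ y in a..b, horizEnergyDensity ρ μ B ξ lam f y =
      horizFlux ρ μ B ξ lam f b - horizFlux ρ μ B ξ lam f a :=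
  intervalIntegral.integral_eq_sub_of_hasDerivAt_of_le hab
    (continuous_horizFlux (hf.of_le (by norm_num))).continuousOn
    (fun y hy => hasDerivAt_horizFlux hf (hODE y hy))
    ((continuous_horizEnergyDensity (hf.of_le (by norm_num))).intervalIntegrable a b)

theorem mul_sobolevEnergy_le_horizFlux_sub (hμ : 0 ≤ μ) (hlam : 0 ≤ lam) (hf : ContDiff ℝ 4 f)
    (hab : a ≤ b) (hODE : ∀ y ∈ Ioo a b, HorizODE ρ μ B ξ lam f y) :
    lam ^ 2 * ρ * sobolevEnergy ξ f a b ≤ horizFlux ρ μ B ξ lam f b - horizFlux ρ μ B ξ lam f a := by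
  have hf' := hf.continuous_deriv (by norm_num)
  have hf₀ := hf.continuous
  rw [← integral_horizEnergyDensity hf hab hODE, sobolevEnergy,
    ← intervalIntegral.integral_const_mul]
  refine intervalIntegral.integral_mono_on hab
    (by apply Continuous.intervalIntegrable; fun_prop)
    ((continuous_horizEnergyDensity (hf.of_le (by norm_num))).intervalIntegrable a b) fun y _ => ?_
  have : 0 ≤ B ^ 2 * ξ ^ 2 * (ξ ^ 2 * f y ^ 2 + deriv f y ^ 2)
      + μ * lam * ((iteratedDeriv 2 f y + ξ ^ 2 * f y) ^ 2 + 4 * ξ ^ 2 * deriv f y ^ 2) := by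
    positivity
  unfold horizEnergyDensity
  linarith

theorem horizFlux_eq_zero {y : ℝ} (h₀ : f y = 0) (h₁ : deriv f y = 0) :
    horizFlux ρ μ B ξ lam f y = 0 := by
  simp only [horizFlux, h₀, h₁, zero_mul, mul_zero, add_zero]

end HorizontalEnergy

theorem IsHorizSol.exists_energy_le {ρp ρm μp μm g B ξ lam : ℝ} {ψ : ℝ → ℝ}
    (hsol : IsHorizSol ρp ρm μp μm g B ξ lam 4 ψ) (hμp : 0 ≤ μp) (hμm : 0 ≤ μm) (hlam : 0 ≤ lam) :
    ∃ ψm ψp : ℝ → ℝ, ContDiff ℝ 4 ψm ∧ ContDiff ℝ 4 ψp ∧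
      EqOn ψ ψm (Icc (-1) 0) ∧ EqOn ψ ψp (Icc 0 1) ∧ ψp 1 = 0 ∧
      lam ^ 2 * (ρp * sobolevEnergy ξ ψp 0 1 + ρm * sobolevEnergy ξ ψm (-1) 0) ≤
        g * (ρp - ρm) * ξ ^ 2 * ψ 0 ^ 2 := by
  obtain ⟨ψm, ψp, hψm, hψp, hm, hp, hψ0, hψ'0, hODEm, hODEp, hJ2, hJ3, hψm₁, hψp₁, hψm', hψp'⟩ :=
    hsol
  have hψp1 : ψp 1 = 0 := (hp 1 (by norm_num)).symm.trans hψp₁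
  have hψm1 : ψm (-1) = 0 := (hm (-1) (by norm_num)).symm.trans hψm₁
  have hEp := mul_sobolevEnergy_le_horizFlux_sub hμp hlam hψp zero_le_one hODEp
  have hEm := mul_sobolevEnergy_le_horizFlux_sub hμm hlam hψm (by norm_num) hODEm
  rw [horizFlux_eq_zero hψp1 hψp'] at hEp
  rw [horizFlux_eq_zero hψm1 hψm'] at hEm
  have hflux_jump : horizFlux ρp μp B ξ lam ψp 0 - horizFlux ρm μm B ξ lam ψm 0 =
      -(g * (ρp - ρm) * ξ ^ 2 * ψ 0 ^ 2) := by
    rw [hp 0 (by norm_num)] at hJ3 ⊢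
    simp only [horizFlux, ← hψ0, ← hψ'0] at hJ2 hJ3 ⊢
    linear_combination -ψp 0 * hJ3 + deriv ψp 0 * hJ2
  exact ⟨ψm, ψp, hψm, hψp, fun y hy => hm y hy, fun y hy => hp y hy, hψp1, by linarith⟩

theorem horizontal_growth_rate_vanishes_with_frequency_general
    (ρp ρm μp μm g B : ℝ)
    (hρm : 0 < ρm) (hρ : ρm < ρp) (hμp : 0 < μp) (hμm : 0 < μm) (hg : 0 < g)
    (ξ : ℝ) (hξ : ξ ≠ 0) (lam : ℝ) (hlam : 0 < lam) (ψ : ℝ → ℝ)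
    (hsol : IsHorizSol ρp ρm μp μm g B ξ lam 4 ψ)
    (hnontriv : ¬ (∀ y ∈ Icc (-1:ℝ) 1, ψ y = 0)) :
    lam ^ 2 ≤ g * (ρp - ρm) * |ξ| / ρp := by
  obtain ⟨ψm, ψp, hψm, hψp, hm, hp, hψp1, henergy⟩ :=
    hsol.exists_energy_le hμp.le hμm.le hlam.le
  have hρp : 0 < ρp := hρm.trans hρ
  set Ep := sobolevEnergy ξ ψp 0 1
  set Em := sobolevEnergy ξ ψm (-1) 0
  have hEp : 0 ≤ Ep := sobolevEnergy_nonneg ξ ψp zero_le_one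
  have hEm : 0 ≤ Em := sobolevEnergy_nonneg ξ ψm (by norm_num)
  have htrace : |ξ| * ψ 0 ^ 2 ≤ Ep := by
    simpa [hp (show (0:ℝ) ∈ Icc 0 1 by norm_num), hψp1, sobolevEnergy_abs] using
      mul_sub_sq_le_sobolevEnergy (hψp.of_le (by norm_num)) zero_le_one |ξ|
  have hpos : 0 < Ep ∨ 0 < Em :=
    sobolevEnergy_pos_or_pos hξ (hψp.of_le (by norm_num)) (hψm.of_le (by norm_num)) (by norm_num)
      (by norm_num) hp hm (by simpa only [not_forall, exists_prop] using hnontriv)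
  have hEp_pos : 0 < Ep := by
    by_contra! hEp_nonpos
    have hEm_pos := hpos.resolve_left hEp_nonpos.not_gt
    have hψ0 : ψ 0 ^ 2 = 0 := by nlinarith [abs_pos.2 hξ, sq_nonneg (ψ 0)]
    rw [hψ0, mul_zero] at henergy
    nlinarith [mul_pos (mul_pos (pow_pos hlam 2) hρm) hEm_pos,
      mul_nonneg (mul_nonneg (sq_nonneg lam) hρp.le) hEp]
  have hgρ : 0 ≤ g * (ρp - ρm) * |ξ| := by have := sub_pos.2 hρ; positivity
  rw [le_div_iff₀ hρp]
  refine le_of_mul_le_mul_right ?_ hEp_pos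
  calc lam ^ 2 * ρp * Ep ≤ lam ^ 2 * (ρp * Ep + ρm * Em) := by
        nlinarith [mul_nonneg (mul_nonneg (sq_nonneg lam) hρm.le) hEm]
    _ ≤ g * (ρp - ρm) * ξ ^ 2 * ψ 0 ^ 2 := henergy
    _ = g * (ρp - ρm) * |ξ| * (|ξ| * ψ 0 ^ 2) := by rw [← sq_abs ξ]; ring
    _ ≤ g * (ρp - ρm) * |ξ| * Ep := by gcongr

/-- any growth rate of a nontrivial solution of the horizontal problem satisfies
`λ² ≤ g[ρ]|ξ|/ρ₊`. -/
theorem horizontal_growth_rate_vanishes_with_frequency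
    (ρp ρm μp μm g B : ℝ)
    (hρm : 0 < ρm) (hρ : ρm < ρp) (hμp : 0 < μp) (hμm : 0 < μm) (hg : 0 < g)
    (hB : B ≠ 0)
    (ξ : ℝ) (hξ : ξ ≠ 0) (lam : ℝ) (hlam : 0 < lam) (ψ : ℝ → ℝ)
    (hsol : IsHorizSol ρp ρm μp μm g B ξ lam 4 ψ)
    (hnontriv : ¬ (∀ y ∈ Icc (-1:ℝ) 1, ψ y = 0)) :
    lam ^ 2 ≤ g * (ρp - ρm) * |ξ| / ρp :=
  horizontal_growth_rate_vanishes_with_frequency_general ρp ρm μp μm g B hρm hρ hμp hμm hg ξ hξ lam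
    hlam ψ hsol hnontriv

end
end

section
/- The supremum defining the critical magnetic number is achieved: there exists a Lipschitz function φ : [−1,1] → ℝ with φ(−1) = φ(1) = 0, not almost everywhere zero, such that g[ρ]φ(0)² = |B|_c² · ∫_{−1}^{1} φ′(y)² dy. -/
open MeasureTheory Set Filter Topology

noncomputable section

/-!
On each half of `[-1, 1]` the fundamental theorem of calculus for Lipschitz functions and the
Cauchy–Schwarz inequality give `φ(0)² ≤ ∫ φ'²`, so every Rayleigh quotient is at most `g[ρ]/2`.
The tent `1 - |y|` attains this value, hence `|B|_c² = g[ρ]/2` and the tent is a maximizer.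
-/

namespace CriticalMagnetic

theorem sq_intervalIntegral_le {f : ℝ → ℝ} {a b : ℝ} (hab : a ≤ b)
    (hf : IntervalIntegrable f volume a b)
    (hf2 : IntervalIntegrable (fun x => f x ^ 2) volume a b) :
    (∫ x in a..b, f x) ^ 2 ≤ (b - a) * ∫ x in a..b, f x ^ 2 := by
  -- `t ↦ ∫ (f - t)²` is a nonnegative quadratic, so its discriminant is nonpositive.
  have hquad : ∀ t : ℝ,
      0 ≤ (b - a) * (t * t) + (-2 * ∫ x in a..b, f x) * t + ∫ x in a..b, f x ^ 2 := by
    intro t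
    have hexpand : ∫ x in a..b, (f x - t) ^ 2
        = (b - a) * (t * t) + (-2 * ∫ x in a..b, f x) * t + ∫ x in a..b, f x ^ 2 := by
      simp_rw [show ∀ x, (f x - t) ^ 2 = f x ^ 2 - 2 * t * f x + t ^ 2 from fun x => by ring]
      rw [intervalIntegral.integral_add (hf2.sub (hf.const_mul _)) intervalIntegrable_const,
        intervalIntegral.integral_sub hf2 (hf.const_mul _), intervalIntegral.integral_const_mul,
        intervalIntegral.integral_const, smul_eq_mul]
      ring
    exact hexpand ▸ intervalIntegral.integral_nonneg hab fun x _ => sq_nonneg _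
  have := discrim_le_zero hquad
  rw [discrim] at this
  linarith

theorem _root_.LipschitzWith.intervalIntegrable_deriv_sq {φ : ℝ → ℝ} {K : NNReal}
    (hφ : LipschitzWith K φ) (a b : ℝ) :
    IntervalIntegrable (fun y => deriv φ y ^ 2) volume a b := by
  refine (intervalIntegrable_const (c := (K : ℝ) ^ 2)).mono_fun'
    ((measurable_deriv φ).pow_const 2).aestronglyMeasurable (ae_of_all _ fun y => ?_)
  have hy : |deriv φ y| ≤ K := by simpa using norm_deriv_le_of_lipschitz (x₀ := y) hφ
  simpa [Real.norm_eq_abs] using pow_le_pow_left₀ (abs_nonneg _) hy 2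

theorem _root_.LipschitzWith.sq_sub_le_mul_integral_deriv_sq {φ : ℝ → ℝ} {K : NNReal}
    (hφ : LipschitzWith K φ) {a b : ℝ} (hab : a ≤ b) :
    (φ b - φ a) ^ 2 ≤ (b - a) * ∫ y in a..b, deriv φ y ^ 2 := by
  have hac := (hφ.lipschitzOnWith (s := uIcc a b)).absolutelyContinuousOnInterval
  rw [← hac.integral_deriv_eq_sub]
  exact sq_intervalIntegral_le hab hac.intervalIntegrable_deriv
    (hφ.intervalIntegrable_deriv_sq a b)

theorem two_mul_sq_le_integral_deriv_sq {φ : ℝ → ℝ} {K : NNReal} (hφ : LipschitzWith K φ)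
    (hm1 : φ (-1) = 0) (hp1 : φ 1 = 0) :
    2 * φ 0 ^ 2 ≤ ∫ y in (-1:ℝ)..1, deriv φ y ^ 2 := by
  have hleft := hφ.sq_sub_le_mul_integral_deriv_sq (show (-1:ℝ) ≤ 0 by norm_num)
  have hright := hφ.sq_sub_le_mul_integral_deriv_sq (show (0:ℝ) ≤ 1 by norm_num)
  rw [hm1] at hleft
  rw [hp1] at hright
  rw [← intervalIntegral.integral_add_adjacent_intervals
    (hφ.intervalIntegrable_deriv_sq (-1) 0) (hφ.intervalIntegrable_deriv_sq 0 1)]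
  linarith

theorem mem_upperBounds_bcSet {g ρp ρm : ℝ} (hc : 0 ≤ g * (ρp - ρm)) :
    g * (ρp - ρm) / 2 ∈ upperBounds (BcSet g ρp ρm) := by
  rintro r ⟨φ, ⟨K, hφ⟩, hm1, hp1, -, rfl⟩
  have hI := two_mul_sq_le_integral_deriv_sq hφ hm1 hp1
  refine div_le_of_le_mul₀ ((by positivity : 0 ≤ 2 * φ 0 ^ 2).trans hI) (by positivity) ?_
  nlinarith

def tent (y : ℝ) : ℝ := 1 - |y|

theorem lipschitzWith_tent : LipschitzWith 1 tent := by
  have h := (LipschitzWith.const (1:ℝ)).sub (lipschitzWith_one_norm (E := ℝ))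
  rwa [zero_add] at h

theorem integral_deriv_tent_sq : ∫ y in (-1:ℝ)..1, deriv tent y ^ 2 = 2 := by
  have hderiv : ∀ y : ℝ, y ≠ 0 → deriv tent y ^ 2 = 1 := fun y hy => by
    rw [show tent = fun y => 1 - |y| from rfl, deriv_const_sub, deriv_abs]
    rcases hy.lt_or_gt with hneg | hpos <;> simp [*]
  rw [intervalIntegral.integral_congr_ae (g := fun _ => (1:ℝ))
    ((Measure.ae_ne volume 0).mono fun y hy _ => hderiv y hy)]
  norm_num

theorem not_ae_tent_eq_zero : ¬ ∀ᵐ y ∂(volume.restrict (Icc (-1:ℝ) 1)), tent y = 0 := by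
  intro h
  have hcont : Continuous tent := lipschitzWith_tent.continuous
  have := Measure.eqOn_Icc_of_ae_eq volume (by norm_num : (-1:ℝ) ≠ 1) h
    hcont.continuousOn continuousOn_const (show (0:ℝ) ∈ Icc (-1) 1 by norm_num)
  norm_num [tent] at this

theorem isGreatest_bcSet {g ρp ρm : ℝ} (hc : 0 ≤ g * (ρp - ρm)) :
    IsGreatest (BcSet g ρp ρm) (g * (ρp - ρm) / 2) :=
  ⟨⟨tent, ⟨1, lipschitzWith_tent⟩, by norm_num [tent], by norm_num [tent], not_ae_tent_eq_zero,
    by norm_num [integral_deriv_tent_sq, tent]⟩, mem_upperBounds_bcSet hc⟩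

end CriticalMagnetic

open CriticalMagnetic in
theorem critical_magnetic_number_achieved_general
    (ρp ρm g Bc : ℝ)
    (hρ : ρm < ρp) (hg : 0 < g)
    (hBcsq : Bc ^ 2 = sSup (BcSet g ρp ρm)) :
    ∃ φ : ℝ → ℝ, (∃ K, LipschitzWith K φ) ∧ φ (-1) = 0 ∧ φ 1 = 0 ∧
      ¬ (∀ᵐ y ∂(volume.restrict (Icc (-1:ℝ) 1)), φ y = 0) ∧
      g * (ρp - ρm) * (φ 0) ^ 2 = Bc ^ 2 * ∫ y in (-1:ℝ)..1, (deriv φ y) ^ 2 := by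
  have hc : 0 ≤ g * (ρp - ρm) := mul_nonneg hg.le (sub_nonneg.2 hρ.le)
  refine ⟨tent, ⟨1, lipschitzWith_tent⟩, by norm_num [tent], by norm_num [tent],
    not_ae_tent_eq_zero, ?_⟩
  rw [hBcsq, (isGreatest_bcSet hc).csSup_eq, integral_deriv_tent_sq]
  norm_num [tent]

/-- the supremum defining the critical magnetic number is achieved. -/
theorem critical_magnetic_number_achieved
    (ρp ρm g Bc : ℝ)
    (hρm : 0 < ρm) (hρ : ρm < ρp) (hg : 0 < g)
    (hBc : 0 < Bc) (hBcsq : Bc ^ 2 = sSup (BcSet g ρp ρm)) :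
    ∃ φ : ℝ → ℝ, (∃ K, LipschitzWith K φ) ∧ φ (-1) = 0 ∧ φ 1 = 0 ∧
      ¬ (∀ᵐ y ∂(volume.restrict (Icc (-1:ℝ) 1)), φ y = 0) ∧
      g * (ρp - ρm) * (φ 0) ^ 2 = Bc ^ 2 * ∫ y in (-1:ℝ)..1, (deriv φ y) ^ 2 :=
  critical_magnetic_number_achieved_general ρp ρm g Bc hρ hg hBcsq

end
end

section
/- Regarded as a function of the magnetic number B on the interval (0, |B|_c), the horizontal critical frequency satisfies the limits: |ξ|_{hc}^B → +∞ as B → 0⁺, and |ξ|_{hc}^B → 0 as B → |B|_c⁻. -/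
/-!
Every quotient in `XihcSet g ρp ρm b` comes from a test function `φ` obeying two bounds: the
definition of `|B|_c` gives `g[ρ] φ(0)² ≤ |B|_c² ∫ φ'²`, and the trace inequality
`φ(0)² ≤ ε ∫ φ'² + ε⁻¹ ∫ φ²`, which follows from `φ(0)² = 2 ∫_{-1}^0 φ φ'`, gives with
`ε = b² / (2 g[ρ])` the bound `g[ρ] φ(0)² ≤ (b² / 2) ∫ φ'² + (2 g[ρ]² / b²) ∫ φ²`. Eliminating
`∫ φ'²` bounds every quotient by `4 g[ρ]² (|B|_c² - b²) / b⁶`, which vanishes at `b = |B|_c`.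
Conversely, one fixed test function (the tent `1 - |y|`) has quotient `c / b² - d` with `c > 0`,
which blows up as `b → 0⁺`.
-/

open MeasureTheory Set Filter Topology

noncomputable section

namespace LipschitzWith

variable {K : NNReal} {φ : ℝ → ℝ}

lemma intervalIntegrable_deriv_sq_s10 (hφ : LipschitzWith K φ) (a b : ℝ) :
    IntervalIntegrable (fun y => deriv φ y ^ 2) volume a b := by
  refine (intervalIntegrable_const (c := (K : ℝ) ^ 2)).mono_fun'
    ((measurable_deriv φ).pow_const 2).aestronglyMeasurable (Eventually.of_forall fun y => ?_)
  simpa only [norm_pow] using pow_le_pow_left₀ (norm_nonneg _) (norm_deriv_le_of_lipschitz hφ) 2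

lemma sq_le_integral_deriv_sq_add_integral_sq (hφ : LipschitzWith K φ) {a b c ε : ℝ}
    (hac : a ≤ c) (hcb : c ≤ b) (ha : φ a = 0) (hε : 0 < ε) :
    φ c ^ 2 ≤ ε * (∫ y in a..b, deriv φ y ^ 2) + ε⁻¹ * ∫ y in a..b, φ y ^ 2 := by
  have hac' : AbsolutelyContinuousOnInterval φ a c :=
    hφ.lipschitzOnWith.absolutelyContinuousOnInterval
  have hφ2 (a b : ℝ) : IntervalIntegrable (fun y => φ y ^ 2) volume a b :=
    (hφ.continuous.pow 2).intervalIntegrable a b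
  have hmono {u : ℝ → ℝ} (hu : ∀ y, 0 ≤ u y) (hint : IntervalIntegrable u volume a b) :
      ∫ y in a..c, u y ≤ ∫ y in a..b, u y :=
    intervalIntegral.integral_mono_interval le_rfl hac hcb (Eventually.of_forall hu) hint
  calc φ c ^ 2 = ∫ y in a..c, (deriv φ y * φ y + φ y * deriv φ y) := by
        rw [hac'.integral_deriv_mul_eq_sub hac', ha]; ring
    _ ≤ ∫ y in a..c, (ε * deriv φ y ^ 2 + ε⁻¹ * φ y ^ 2) := by
        refine intervalIntegral.integral_mono_on hac ?_ ?_ fun y _ => ?_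
        · exact (hac'.intervalIntegrable_deriv.mul_continuousOn hφ.continuous.continuousOn).add
            (hac'.intervalIntegrable_deriv.continuousOn_mul hφ.continuous.continuousOn)
        · exact ((hφ.intervalIntegrable_deriv_sq_s10 a c).const_mul ε).add ((hφ2 a c).const_mul ε⁻¹)
        · -- `ε u² + ε⁻¹ v² - 2uv = ε⁻¹ (ε u - v)²`
          have h := sq_nonneg (ε * deriv φ y - φ y)
          have hεinv : ε * ε⁻¹ = 1 := mul_inv_cancel₀ hε.ne'
          nlinarith [inv_pos.2 hε, mul_nonneg (inv_pos.2 hε).le h]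
    _ = ε * (∫ y in a..c, deriv φ y ^ 2) + ε⁻¹ * ∫ y in a..c, φ y ^ 2 := by
        rw [intervalIntegral.integral_add ((hφ.intervalIntegrable_deriv_sq_s10 a c).const_mul ε)
          ((hφ2 a c).const_mul ε⁻¹), intervalIntegral.integral_const_mul,
          intervalIntegral.integral_const_mul]
    _ ≤ ε * (∫ y in a..b, deriv φ y ^ 2) + ε⁻¹ * ∫ y in a..b, φ y ^ 2 := by
        gcongr
        · exact hmono (fun y => sq_nonneg _) (hφ.intervalIntegrable_deriv_sq_s10 a b)
        · exact hmono (fun y => sq_nonneg _) (hφ2 a b)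

lemma apply_eq_zero_of_integral_deriv_sq_eq_zero (hφ : LipschitzWith K φ) {a b c : ℝ}
    (hac : a ≤ c) (hcb : c ≤ b) (ha : φ a = 0) (h : ∫ y in a..b, deriv φ y ^ 2 = 0) :
    φ c = 0 := by
  have hbound : ∀ᶠ ε in atTop, φ c ^ 2 ≤ ε⁻¹ * ∫ y in a..b, φ y ^ 2 :=
    (eventually_gt_atTop 0).mono fun ε hε => by
      simpa [h] using hφ.sq_le_integral_deriv_sq_add_integral_sq hac hcb ha hε
  have hlim : Tendsto (fun ε : ℝ => ε⁻¹ * ∫ y in a..b, φ y ^ 2) atTop (𝓝 0) := by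
    simpa using tendsto_inv_atTop_zero.mul_const (∫ y in a..b, φ y ^ 2)
  exact pow_eq_zero_iff two_ne_zero |>.1 <| le_antisymm (ge_of_tendsto hlim hbound) (sq_nonneg _)

end LipschitzWith

lemma Continuous.integral_sq_pos_iff {φ : ℝ → ℝ} (hφ : Continuous φ) {a b : ℝ} (hab : a ≤ b) :
    0 < ∫ y in a..b, φ y ^ 2 ↔ ¬ ∀ᵐ y ∂volume.restrict (Icc a b), φ y = 0 := by
  rw [intervalIntegral.integral_of_le hab, ← Measure.restrict_congr_set Ioc_ae_eq_Icc,
    (setIntegral_nonneg measurableSet_Ioc fun y _ => sq_nonneg (φ y)).lt_iff_ne', ne_eq,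
    integral_eq_zero_iff_of_nonneg (fun y => sq_nonneg (φ y)) (hφ.pow 2).integrableOn_Ioc]
  simp [EventuallyEq]

section CriticalFrequency

variable {g ρp ρm : ℝ}

lemma mul_sq_le_of_forall_mem_bcSet_le {B : ℝ} (hB : ∀ s ∈ BcSet g ρp ρm, s ≤ B ^ 2)
    {K : NNReal} {φ : ℝ → ℝ} (hφ : LipschitzWith K φ) (hm1 : φ (-1) = 0) (hp1 : φ 1 = 0)
    (hne : ¬ ∀ᵐ y ∂volume.restrict (Icc (-1:ℝ) 1), φ y = 0) :
    g * (ρp - ρm) * φ 0 ^ 2 ≤ B ^ 2 * ∫ y in (-1:ℝ)..1, deriv φ y ^ 2 := by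
  rcases (intervalIntegral.integral_nonneg (by norm_num : (-1:ℝ) ≤ 1) fun y _ =>
    sq_nonneg (deriv φ y)).eq_or_lt with hP | hP
  · -- `BcSet` only sees the junk quotient `x / 0 = 0` here; the trace inequality gives `φ 0 = 0`
    rw [hφ.apply_eq_zero_of_integral_deriv_sq_eq_zero (by norm_num) (by norm_num) hm1 hP.symm,
      ← hP]
    simp
  · rw [← div_le_iff₀ hP]
    exact hB _ ⟨φ, ⟨K, hφ⟩, hm1, hp1, hne, rfl⟩

lemma le_of_mem_xihcSet (hG : 0 < g * (ρp - ρm)) {B b r : ℝ}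
    (hB : ∀ s ∈ BcSet g ρp ρm, s ≤ B ^ 2) (hb : 0 < b) (hbB : b ≤ B)
    (hr : r ∈ XihcSet g ρp ρm b) :
    r ≤ 4 * (g * (ρp - ρm)) ^ 2 * (B ^ 2 - b ^ 2) / b ^ 6 := by
  obtain ⟨φ, ⟨K, hφ⟩, hm1, hp1, hne, rfl⟩ := hr
  have hQ : 0 < ∫ y in (-1:ℝ)..1, φ y ^ 2 :=
    (hφ.continuous.integral_sq_pos_iff (by norm_num)).2 hne
  have hcrit := mul_sq_le_of_forall_mem_bcSet_le hB hφ hm1 hp1 hne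
  have htrace := hφ.sq_le_integral_deriv_sq_add_integral_sq (a := -1) (b := 1) (c := 0)
    (ε := b ^ 2 / (2 * (g * (ρp - ρm)))) (by norm_num) (by norm_num) hm1 (by positivity)
  set G := g * (ρp - ρm)
  set P := ∫ y in (-1:ℝ)..1, deriv φ y ^ 2
  set Q := ∫ y in (-1:ℝ)..1, φ y ^ 2
  have htrace' : G * φ 0 ^ 2 ≤ b ^ 2 / 2 * P + 2 * G ^ 2 / b ^ 2 * Q := by
    calc G * φ 0 ^ 2 ≤ G * (b ^ 2 / (2 * G) * P + (b ^ 2 / (2 * G))⁻¹ * Q) := by gcongr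
      _ = b ^ 2 / 2 * P + 2 * G ^ 2 / b ^ 2 * Q := by field_simp
  have hN : (G * φ 0 ^ 2 - b ^ 2 * P) * b ^ 4 ≤ 4 * G ^ 2 * (B ^ 2 - b ^ 2) * Q := by
    set N := G * φ 0 ^ 2 - b ^ 2 * P
    have ht : 0 ≤ B ^ 2 - b ^ 2 := by nlinarith
    have h1 : N ≤ (B ^ 2 - b ^ 2) * P := by linarith
    have h2 : b ^ 2 * N ≤ -(b ^ 4 / 2) * P + 2 * G ^ 2 * Q := by
      have := mul_le_mul_of_nonneg_left htrace' (sq_nonneg b)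
      field_simp at this
      linarith
    have h3 : N * (b ^ 4 / 2 + (B ^ 2 - b ^ 2) * b ^ 2) ≤ 2 * G ^ 2 * (B ^ 2 - b ^ 2) * Q := by
      nlinarith [mul_le_mul_of_nonneg_left h1 (by positivity : (0:ℝ) ≤ b ^ 4 / 2),
        mul_le_mul_of_nonneg_left h2 ht]
    rcases le_or_gt N 0 with hN | hN
    · nlinarith [mul_nonneg (mul_nonneg (sq_nonneg G) ht) hQ.le, pow_pos hb 4]
    · nlinarith [mul_nonneg hN.le (mul_nonneg ht (sq_nonneg b))]
  rw [div_le_div_iff₀ (by positivity) (by positivity)]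
  nlinarith [hN]

lemma sSup_xihcSet_le (hG : 0 < g * (ρp - ρm)) {B b : ℝ}
    (hB : ∀ s ∈ BcSet g ρp ρm, s ≤ B ^ 2) (hb : 0 < b) (hbB : b ≤ B) :
    sSup (XihcSet g ρp ρm b) ≤ 4 * (g * (ρp - ρm)) ^ 2 * (B ^ 2 - b ^ 2) / b ^ 6 :=
  Real.sSup_le (fun _ hr => le_of_mem_xihcSet hG hB hb hbB hr) <| by
    have : 0 ≤ B ^ 2 - b ^ 2 := by nlinarith
    positivity

lemma exists_mem_xihcSet_tendsto_atTop (hG : 0 < g * (ρp - ρm)) :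
    ∃ r : ℝ → ℝ, (∀ b, r b ∈ XihcSet g ρp ρm b) ∧ Tendsto r (𝓝[>] 0) atTop := by
  set φ : ℝ → ℝ := fun y => 1 - |y|
  have hφ : LipschitzWith (0 + 1) φ := (LipschitzWith.const 1).sub lipschitzWith_one_norm
  set P := ∫ y in (-1:ℝ)..1, deriv φ y ^ 2
  set Q := ∫ y in (-1:ℝ)..1, φ y ^ 2
  have hQ : 0 < Q := intervalIntegral.intervalIntegral_pos_of_pos_on
    ((hφ.continuous.pow 2).intervalIntegrable _ _)
    (fun y hy => by have := abs_lt.2 hy; simp only [φ]; nlinarith) (by norm_num)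
  refine ⟨fun b => (g * (ρp - ρm) * φ 0 ^ 2 - b ^ 2 * P) / (b ^ 2 * Q), fun b => ⟨φ, ⟨_, hφ⟩,
    by norm_num [φ], by norm_num [φ], (hφ.continuous.integral_sq_pos_iff (by norm_num)).1 hQ,
    rfl⟩, ?_⟩
  have hlim : Tendsto (fun b : ℝ => g * (ρp - ρm) / Q * (b⁻¹) ^ 2 + -(P / Q)) (𝓝[>] 0) atTop :=
    tendsto_atTop_add_const_right _ _ <|
      ((tendsto_pow_atTop two_ne_zero).comp tendsto_inv_nhdsGT_zero).const_mul_atTop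
        (by positivity)
  refine hlim.congr' (eventually_mem_nhdsWithin.mono fun b (hb : 0 < b) => ?_)
  simp only [φ]
  field_simp
  ring

lemma tendsto_sSup_xihcSet_atTop (hG : 0 < g * (ρp - ρm)) {B : ℝ}
    (hB : ∀ s ∈ BcSet g ρp ρm, s ≤ B ^ 2) (hBpos : 0 < B) :
    Tendsto (fun b => sSup (XihcSet g ρp ρm b)) (𝓝[>] 0) atTop := by
  obtain ⟨r, hr, hr_lim⟩ := exists_mem_xihcSet_tendsto_atTop hG
  refine tendsto_atTop_mono' _ ?_ hr_lim
  filter_upwards [Ioo_mem_nhdsGT hBpos] with b hb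
  exact le_csSup ⟨_, fun _ hs => le_of_mem_xihcSet hG hB hb.1 hb.2.le hs⟩ (hr b)

end CriticalFrequency

theorem horizontal_critical_frequency_limits_general
    (ρp ρm g Bc : ℝ)
    (hρ : ρm < ρp) (hg : 0 < g)
    (hBc : 0 < Bc) (hBcsq : Bc ^ 2 = sSup (BcSet g ρp ρm)) :
    ∀ f : ℝ → ℝ,
      (∀ b : ℝ, 0 < b → b < Bc → 0 ≤ f b ∧ (f b) ^ 2 = sSup (XihcSet g ρp ρm b)) →
      Tendsto f (𝓝[Ioo (0:ℝ) Bc] 0) atTop ∧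
      Tendsto f (𝓝[Ioo (0:ℝ) Bc] Bc) (𝓝 0) := by
  intro f hf
  have hG : 0 < g * (ρp - ρm) := mul_pos hg (sub_pos.2 hρ)
  have hBdd : BddAbove (BcSet g ρp ρm) := by
    by_contra h
    rw [Real.sSup_of_not_bddAbove h] at hBcsq
    exact (pow_pos hBc 2).ne' hBcsq
  have hB (s) (hs : s ∈ BcSet g ρp ρm) : s ≤ Bc ^ 2 := hBcsq ▸ le_csSup hBdd hs
  have hsqrt : ∀ x, f =ᶠ[𝓝[Ioo 0 Bc] x] fun b => √(sSup (XihcSet g ρp ρm b)) := fun x =>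
    eventually_mem_nhdsWithin.mono fun b hb => by
      dsimp only
      rw [← (hf b hb.1 hb.2).2, Real.sqrt_sq (hf b hb.1 hb.2).1]
  constructor
  · have hS := (tendsto_sSup_xihcSet_atTop hG hB hBc).mono_left
      (nhdsWithin_mono 0 (Ioo_subset_Ioi_self : Ioo 0 Bc ⊆ Ioi 0))
    exact (Real.tendsto_sqrt_atTop.comp hS).congr' (hsqrt 0).symm
  · have hM : Tendsto (fun b => √(4 * (g * (ρp - ρm)) ^ 2 * (Bc ^ 2 - b ^ 2) / b ^ 6))
        (𝓝[Ioo 0 Bc] Bc) (𝓝 0) := by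
      have : ContinuousAt (fun b => √(4 * (g * (ρp - ρm)) ^ 2 * (Bc ^ 2 - b ^ 2) / b ^ 6)) Bc :=
        by fun_prop (disch := positivity)
      simpa using this.tendsto.mono_left nhdsWithin_le_nhds
    refine tendsto_of_tendsto_of_tendsto_of_le_of_le' tendsto_const_nhds hM ?_ ?_
    · exact eventually_mem_nhdsWithin.mono fun b hb => (hf b hb.1 hb.2).1
    · filter_upwards [hsqrt Bc, eventually_mem_nhdsWithin] with b hfb hb
      rw [hfb]
      exact Real.sqrt_le_sqrt (sSup_xihcSet_le hG hB hb.1 hb.2.le)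

/-- as a function of `B ∈ (0, |B|_c)`, the horizontal critical frequency tends to
`+∞` as `B → 0⁺` and to `0` as `B → |B|_c⁻`. -/
theorem horizontal_critical_frequency_limits
    (ρp ρm g Bc : ℝ)
    (hρm : 0 < ρm) (hρ : ρm < ρp) (hg : 0 < g)
    (hBc : 0 < Bc) (hBcsq : Bc ^ 2 = sSup (BcSet g ρp ρm)) :
    ∀ f : ℝ → ℝ,
      (∀ b : ℝ, 0 < b → b < Bc → 0 ≤ f b ∧ (f b) ^ 2 = sSup (XihcSet g ρp ρm b)) →
      Tendsto f (𝓝[Ioo (0:ℝ) Bc] 0) atTop ∧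
      Tendsto f (𝓝[Ioo (0:ℝ) Bc] Bc) (𝓝 0) :=
  horizontal_critical_frequency_limits_general ρp ρm g Bc hρ hg hBc hBcsq

end
end

section
/- If ψ ∈ C²([−1,1]) with ψ(−1) = ψ(1) = ψ′(−1) = ψ′(1) = 0 and ξ ≠ 0 satisfy E₀(ψ) < 0, then necessarily ψ(0) ≠ 0, |B| < |B|_c, and |ξ| > |ξ|_{vc}^B. -/
open MeasureTheory Set Filter Topology

noncomputable section

/-- The magnetic part `E₀` of the energy of the vertical problem. -/
def E0 (g ρp ρm B ξ : ℝ) (ψ : ℝ → ℝ) : ℝ :=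
  (1/2) * (∫ y in (-1:ℝ)..1, B ^ 2 * ((deriv ψ y) ^ 2 + (deriv (deriv ψ) y) ^ 2 / ξ ^ 2)) -
    (1/2) * (g * (ρp - ρm)) * (ψ 0) ^ 2

/-- The viscous part `E₁` of the energy, with piecewise viscosity `μ₊` above, `μ₋` below. -/
def E1 (μp μm ξ : ℝ) (ψ : ℝ → ℝ) : ℝ :=
  (1/2) * ∫ y in (-1:ℝ)..1,
    (if 0 < y then μp else μm) *
      (4 * ξ ^ 2 * (deriv ψ y) ^ 2 + (ξ ^ 2 * ψ y + deriv (deriv ψ) y) ^ 2)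

/-- The normalization functional `J`, with piecewise density `ρ₊` above, `ρ₋` below. -/
def Jfun (ρp ρm ξ : ℝ) (ψ : ℝ → ℝ) : ℝ :=
  (1/2) * ∫ y in (-1:ℝ)..1,
    (if 0 < y then ρp else ρm) * (ξ ^ 2 * (ψ y) ^ 2 + (deriv ψ y) ^ 2)

/-- `ψ` is an admissible test function: `C²` with vanishing boundary values of `ψ` and `ψ'`. -/
def Adm (ψ : ℝ → ℝ) : Prop :=
  ContDiff ℝ 2 ψ ∧ ψ (-1) = 0 ∧ ψ 1 = 0 ∧ deriv ψ (-1) = 0 ∧ deriv ψ 1 = 0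

/-- `α(s)`: the infimum of the modified energy `E(ψ;s) = ξ²E₀(ψ) + sE₁(ψ)` over admissible
`ψ` normalized by `J(ψ) = 1`. -/
def alpha (ρp ρm μp μm g B ξ s : ℝ) : ℝ :=
  sInf {r : ℝ | ∃ ψ : ℝ → ℝ, Adm ψ ∧ Jfun ρp ρm ξ ψ = 1 ∧
    r = ξ ^ 2 * E0 g ρp ρm B ξ ψ + s * E1 μp μm ξ ψ}

/-! `E₀(ψ) < 0` says `B² ∫ψ'² + (B²/ξ²) ∫ψ''² < g[ρ] ψ(0)²`. Both terms on the left are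
nonnegative, so `ψ(0) ≠ 0`. Dropping the second term, `B²` is below the Rayleigh quotient of `ψ`
(made globally Lipschitz by extending it off `[-1, 1]`), hence below `|B|_c²`. Dropping nothing
and multiplying by `ξ²`, the quotient of `ψ` defining `|ξ|_{vc}^B` is below `ξ²`. -/

theorem Real.le_sSup_of_sSup_pos {S : Set ℝ} {r : ℝ} (hS : 0 < sSup S) (hr : r ∈ S) :
    r ≤ sSup S := by
  refine le_csSup ?_ hr
  by_contra hunbdd
  rw [Real.sSup_of_not_bddAbove hunbdd] at hS
  exact hS.false

theorem ContDiff.continuous_deriv_deriv {𝕜 F : Type*} [NontriviallyNormedField 𝕜]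
    [NormedAddCommGroup F] [NormedSpace 𝕜 F] {f : 𝕜 → F} (hf : ContDiff 𝕜 2 f) :
    Continuous (deriv (deriv f)) := by
  simpa only [iteratedDeriv_succ, iteratedDeriv_zero] using hf.continuous_iteratedDeriv 2 le_rfl

section Interval

variable {a b : ℝ}

theorem integral_deriv_sq_pos {f : ℝ → ℝ} (hf : ContDiff ℝ 1 f) {x : ℝ} (hx : x ∈ Icc a b)
    (hfx : f x ≠ f b) : 0 < ∫ y in a..b, deriv f y ^ 2 := by
  have hxb : x < b := hx.2.lt_of_ne (by rintro rfl; exact hfx rfl)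
  obtain ⟨c, hc, hslope⟩ := exists_deriv_eq_slope f hxb hf.continuous.continuousOn
    (hf.differentiable one_ne_zero).differentiableOn
  have hfc : deriv f c ≠ 0 := by
    rw [hslope]
    exact div_ne_zero (sub_ne_zero.mpr hfx.symm) (sub_ne_zero.mpr hxb.ne')
  exact intervalIntegral.integral_pos (hx.1.trans_lt hxb)
    ((hf.continuous_deriv le_rfl).pow 2).continuousOn (fun _ _ => sq_nonneg _)
    ⟨c, ⟨hx.1.trans hc.1.le, hc.2.le⟩, pow_two_pos_of_ne_zero hfc⟩

theorem integral_deriv_sq_congr_of_eqOn {f g : ℝ → ℝ} (hab : a ≤ b) (hfg : EqOn f g (Icc a b)) :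
    ∫ y in a..b, deriv f y ^ 2 = ∫ y in a..b, deriv g y ^ 2 := by
  simp only [intervalIntegral.integral_of_le hab, integral_Ioc_eq_integral_Ioo]
  refine setIntegral_congr_fun measurableSet_Ioo fun y hy => ?_
  have hfg_nhds : f =ᶠ[𝓝 y] g :=
    eventuallyEq_of_mem (isOpen_Ioo.mem_nhds hy) (hfg.mono Ioo_subset_Icc_self)
  rw [hfg_nhds.deriv_eq]

theorem not_ae_restrict_Icc_eq_zero {f : ℝ → ℝ} (hf : Continuous f) (hab : a < b) {x : ℝ}
    (hx : x ∈ Icc a b) (hfx : f x ≠ 0) : ¬ ∀ᵐ y ∂(volume.restrict (Icc a b)), f y = 0 := by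
  intro hae
  refine hfx (Measure.eqOn_of_ae_eq (g := fun _ => 0) hae hf.continuousOn continuousOn_const ?_ hx)
  rw [interior_Icc, closure_Ioo hab.ne]

theorem ContDiff.exists_lipschitzWith_eqOn_Icc {f : ℝ → ℝ} (hf : ContDiff ℝ 1 f) :
    ∃ (φ : ℝ → ℝ) (K : NNReal), LipschitzWith K φ ∧ EqOn φ f (Icc a b) := by
  obtain ⟨K, hK⟩ := hf.contDiffOn.exists_lipschitzOnWith one_ne_zero (convex_Icc a b)
    isCompact_Icc
  obtain ⟨φ, hφ, hφf⟩ := hK.extend_real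
  exact ⟨φ, K, hφ, hφf.symm⟩

end Interval

section Quotients

variable {g ρp ρm B : ℝ}

theorem mem_BcSet {ψ : ℝ → ℝ} (hψ : ContDiff ℝ 1 ψ) (hm1 : ψ (-1) = 0) (h1 : ψ 1 = 0)
    (hψ0 : ψ 0 ≠ 0) :
    g * (ρp - ρm) * ψ 0 ^ 2 / ∫ y in (-1:ℝ)..1, deriv ψ y ^ 2 ∈ BcSet g ρp ρm := by
  have h0 : (0 : ℝ) ∈ Icc (-1) 1 := by norm_num
  obtain ⟨φ, K, hφ, hφψ⟩ := hψ.exists_lipschitzWith_eqOn_Icc (a := -1) (b := 1)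
  refine ⟨φ, ⟨K, hφ⟩, by rw [hφψ (by norm_num), hm1], by rw [hφψ (by norm_num), h1],
    not_ae_restrict_Icc_eq_zero hφ.continuous (by norm_num) h0 (by rwa [hφψ h0]), ?_⟩
  rw [integral_deriv_sq_congr_of_eqOn (by norm_num) hφψ, hφψ h0]

theorem XivcSet_bddBelow : BddBelow (XivcSet g ρp ρm B) := by
  refine ⟨0, ?_⟩
  rintro r ⟨φ, -, -, -, -, -, hD, rfl⟩
  exact div_nonneg (mul_nonneg (sq_nonneg B)
    (intervalIntegral.integral_nonneg (by norm_num) fun _ _ => sq_nonneg _)) hD.le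

end Quotients

theorem E0_eq {g ρp ρm B ξ : ℝ} {ψ : ℝ → ℝ} (hψ : ContDiff ℝ 2 ψ) :
    E0 g ρp ρm B ξ ψ = (B ^ 2 * (∫ y in (-1:ℝ)..1, deriv ψ y ^ 2) +
      B ^ 2 / ξ ^ 2 * (∫ y in (-1:ℝ)..1, deriv (deriv ψ) y ^ 2) - g * (ρp - ρm) * ψ 0 ^ 2) / 2 := by
  have h1 : IntervalIntegrable (fun y => B ^ 2 * deriv ψ y ^ 2) volume (-1) 1 :=
    (continuous_const.mul ((hψ.continuous_deriv one_le_two).pow 2)).intervalIntegrable _ _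
  have h2 : IntervalIntegrable (fun y => B ^ 2 / ξ ^ 2 * deriv (deriv ψ) y ^ 2) volume (-1) 1 :=
    (continuous_const.mul (hψ.continuous_deriv_deriv.pow 2)).intervalIntegrable _ _
  have hsplit : (∫ y in (-1:ℝ)..1, B ^ 2 * (deriv ψ y ^ 2 + deriv (deriv ψ) y ^ 2 / ξ ^ 2)) =
      ∫ y in (-1:ℝ)..1, (B ^ 2 * deriv ψ y ^ 2 + B ^ 2 / ξ ^ 2 * deriv (deriv ψ) y ^ 2) :=
    intervalIntegral.integral_congr fun y _ => by ring
  rw [E0, hsplit, intervalIntegral.integral_add h1 h2, intervalIntegral.integral_const_mul,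
    intervalIntegral.integral_const_mul]
  ring

theorem E0_neg_necessary_conditions_general
    (ρp ρm g B Bc : ℝ)
    (hBc : 0 < Bc) (hBcsq : Bc ^ 2 = sSup (BcSet g ρp ρm))
    (ξ : ℝ) (hξ : ξ ≠ 0) (ψ : ℝ → ℝ) (hψ : Adm ψ)
    (hneg : E0 g ρp ρm B ξ ψ < 0) :
    ψ 0 ≠ 0 ∧ |B| < Bc ∧
      ∀ xivc : ℝ, 0 ≤ xivc → xivc ^ 2 = sInf (XivcSet g ρp ρm B) → xivc < |ξ| := by
  obtain ⟨hC2, hm1, h1, hdm1, hd1⟩ := hψ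
  have hC1 : ContDiff ℝ 1 ψ := hC2.of_le one_le_two
  rw [E0_eq hC2] at hneg
  set I1 := ∫ y in (-1:ℝ)..1, deriv ψ y ^ 2
  set I2 := ∫ y in (-1:ℝ)..1, deriv (deriv ψ) y ^ 2
  have hI1 : 0 ≤ B ^ 2 * I1 :=
    mul_nonneg (sq_nonneg B) (intervalIntegral.integral_nonneg (by norm_num) fun _ _ => sq_nonneg _)
  have hI2 : 0 ≤ B ^ 2 / ξ ^ 2 * I2 := mul_nonneg (by positivity)
    (intervalIntegral.integral_nonneg (by norm_num) fun _ _ => sq_nonneg _)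
  have hψ0 : ψ 0 ≠ 0 := fun h0 => by rw [h0] at hneg; linarith
  refine ⟨hψ0, ?_, fun xivc hxivc hxivc_sq => ?_⟩
  · have hI1_pos : 0 < I1 := integral_deriv_sq_pos hC1 (x := 0) (by norm_num) (by rwa [h1])
    have hB_sq : B ^ 2 < Bc ^ 2 := calc
      B ^ 2 < g * (ρp - ρm) * ψ 0 ^ 2 / I1 := by rw [lt_div_iff₀ hI1_pos]; linarith
      _ ≤ Bc ^ 2 := hBcsq ▸ Real.le_sSup_of_sSup_pos (hBcsq ▸ pow_pos hBc 2)
        (mem_BcSet hC1 hm1 h1 hψ0)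
    simpa [abs_of_pos hBc] using sq_lt_sq.mp hB_sq
  · have hD : 0 < g * (ρp - ρm) * ψ 0 ^ 2 - B ^ 2 * I1 := by linarith
    have hmem : B ^ 2 * I2 / (g * (ρp - ρm) * ψ 0 ^ 2 - B ^ 2 * I1) ∈ XivcSet g ρp ρm B :=
      ⟨ψ, hC2, hm1, h1, hdm1, hd1, hD, rfl⟩
    have hξ_sq : xivc ^ 2 < ξ ^ 2 := calc
      xivc ^ 2 ≤ B ^ 2 * I2 / (g * (ρp - ρm) * ψ 0 ^ 2 - B ^ 2 * I1) :=
        hxivc_sq ▸ csInf_le XivcSet_bddBelow hmem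
      _ < ξ ^ 2 := by
        rw [div_lt_iff₀ hD, show B ^ 2 * I2 = ξ ^ 2 * (B ^ 2 / ξ ^ 2 * I2) by field_simp]
        exact mul_lt_mul_of_pos_left (by linarith) (by positivity)
    simpa [abs_of_nonneg hxivc] using sq_lt_sq.mp hξ_sq

/-- if `E₀(ψ) < 0` for an admissible `ψ`, then `ψ(0) ≠ 0`, `|B| < |B|_c`, and
`|ξ| > |ξ|_{vc}^B`. -/
theorem E0_neg_necessary_conditions
    (ρp ρm g B Bc : ℝ)
    (hρm : 0 < ρm) (hρ : ρm < ρp) (hg : 0 < g)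
    (hB : B ≠ 0) (hBc : 0 < Bc) (hBcsq : Bc ^ 2 = sSup (BcSet g ρp ρm))
    (ξ : ℝ) (hξ : ξ ≠ 0) (ψ : ℝ → ℝ) (hψ : Adm ψ)
    (hneg : E0 g ρp ρm B ξ ψ < 0) :
    ψ 0 ≠ 0 ∧ |B| < Bc ∧
      ∀ xivc : ℝ, 0 ≤ xivc → xivc ^ 2 = sInf (XivcSet g ρp ρm B) → xivc < |ξ| :=
  E0_neg_necessary_conditions_general ρp ρm g B Bc hBc hBcsq ξ hξ ψ hψ hneg

end
end
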